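/- arXiv:1801.05524 — 9 statements merged into one kernel-verified Lean document; each statement's English description precedes it below -/
import Mathlib

section
/- Let p > q ≥ 0 be integers, set n = p+q, and let k be an integer with 0 ≤ k ≤ 2q+1. Then the number of signed (2p,2q+1) symmetric involutions (π,ε) whose involution π has exactly k 2-cycles equals C(n−2l, p−l)·C(n, 2l)·a(2l) if k = 2l is even, and equals C(n−2l−1, p−l−1)·C(n, 2l+1)·a(2l+1) if k = 2l+1 is odd, where C denotes the binomial coefficient. -/
/-- `aSeq m = Σ_{b=0}^{⌊m/2⌋} C(m,2b)·(2b)!/b!`. -/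
def aSeq (m : ℕ) : ℕ :=
  ∑ b ∈ Finset.range (m / 2 + 1), Nat.choose m (2 * b) * (Nat.factorial (2 * b) / Nat.factorial b)

/-- A signed `(2p,2q+1)` symmetric involution: a pair `(π, ε)` where `π` is an involution of
`{1,…,2n+1}` (modelled as `Fin (2(p+q)+1)`) commuting with the order-reversing map
`i ↦ 2n+2-i` (here `Fin.rev`), and `ε` labels the fixed points of `π` by signs
(`true` = `+`, `false` = `-`; we normalize `ε` to `false` off the fixed points),
symmetrically under `Fin.rev`, with exactly `2p-(2q+1)` more `+` labels than `-` labels. -/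
def IsSignedSymInv (p q : ℕ) (π : Equiv.Perm (Fin (2 * (p + q) + 1)))
    (ε : Fin (2 * (p + q) + 1) → Bool) : Prop :=
  π * π = 1 ∧
  (∀ i, π i.rev = (π i).rev) ∧
  (∀ i, π i ≠ i → ε i = false) ∧
  (∀ i, π i = i → ε i.rev = ε i) ∧
  (Finset.univ.filter (fun i => π i = i ∧ ε i = true)).card
    = (Finset.univ.filter (fun i => π i = i ∧ ε i = false)).card + (2 * p - (2 * q + 1))

/-- The number of signed `(2p,2q+1)` symmetric involutions whose involution has exactly `k`
2-cycles, i.e. exactly `2k` non-fixed points. -/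
noncomputable def signedSymInvCount (p q k : ℕ) : ℕ :=
  Nat.card {x : Equiv.Perm (Fin (2 * (p + q) + 1)) × (Fin (2 * (p + q) + 1) → Bool) //
    IsSignedSymInv p q x.1 x.2 ∧
    (Finset.univ.filter (fun i => x.1 i ≠ i)).card = 2 * k}

/-!
Identify `{1, …, 2n+1}` with `{0} ∪ {±1, …, ±n}` (`Option (Fin n × Bool)`), so that
`i ↦ 2n+2-i` becomes `x ↦ -x`. A symmetric involution then fixes `0` and is the same thing as an
involution of the hyperoctahedral group, i.e. a map `f : i ↦ (σ i, t i)` with `σ² = 1` and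
`t ∘ σ = t`; its number of 2-cycles is the size of its support `{i | f i ≠ (i, +)}`. Grouping by
support there are `C(n, k) · a(k)` of them with `k` 2-cycles, since the number `A(m)` of such maps
with full support on an `m`-set satisfies `A(m+1) = A(m) + 2m · A(m-1)` (a point is either a sign
change or paired, in two ways, with one of the `m` others), which is the recursion of `a`.
A symmetric signing is determined by the sign at `0` and the set of fixed pairs `±i` labelled `+`;
the balance condition forces exactly `2p - k` labels `+`, so each such involution carries
`C(n - k, ⌊(2p - k)/2⌋)` signings.
-/

open Finset Equiv
open scoped Nat

lemma factorial_two_mul_succ_div_factorial_succ (b : ℕ) :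
    (2 * (b + 1))! / (b + 1)! = 2 * (2 * b + 1) * ((2 * b)! / b !) := by
  have hdvd : ∀ c, c ! ∣ (2 * c)! := fun c => Nat.factorial_dvd_factorial (by omega)
  apply Nat.eq_of_mul_eq_mul_right (Nat.factorial_pos (b + 1))
  rw [Nat.div_mul_cancel (hdvd _), show 2 * (b + 1) = 2 * b + 1 + 1 by ring,
    Nat.factorial_succ, Nat.factorial_succ, Nat.factorial_succ b]
  set g := (2 * b)! / (b !)
  rw [← Nat.div_mul_cancel (hdvd b)]
  ring

lemma aSeq_eq_sum_range (m : ℕ) {t : ℕ} (ht : m / 2 < t) :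
    aSeq m = ∑ b ∈ range t, m.choose (2 * b) * ((2 * b)! / b !) := by
  refine sum_subset (range_subset_range.mpr ht) fun b _ hb => ?_
  rw [mem_range, not_lt] at hb
  rw [Nat.choose_eq_zero_of_lt (by omega), zero_mul]

lemma aSeq_add_two (m : ℕ) : aSeq (m + 2) = aSeq (m + 1) + 2 * (m + 1) * aSeq m := by
  rw [aSeq_eq_sum_range (m + 2) (t := m / 2 + 2) (by omega),
    aSeq_eq_sum_range (m + 1) (t := m / 2 + 2) (by omega),
    aSeq_eq_sum_range m (t := m / 2 + 1) (by omega), sum_range_succ' _ (m / 2 + 1),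
    sum_range_succ' _ (m / 2 + 1), mul_sum, add_right_comm, ← sum_add_distrib]
  congr 1
  refine sum_congr rfl fun b _ => ?_
  -- Pascal's rule, and `(m + 1) * C(m, 2b) = C(m + 1, 2b + 1) * (2b + 1)`
  have hpascal := Nat.add_one_mul_choose_eq m (2 * b)
  rw [factorial_two_mul_succ_div_factorial_succ, show 2 * (b + 1) = 2 * b + 1 + 1 by ring,
    Nat.choose_succ_succ (m + 1) (2 * b + 1),
    show 2 * (m + 1) * (m.choose (2 * b) * ((2 * b)! / b !))
      = 2 * ((2 * b)! / b !) * ((m + 1) * m.choose (2 * b)) by ring, hpascal]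
  ring

lemma aSeq_succ (m : ℕ) : aSeq (m + 1) = aSeq m + 2 * m * aSeq (m - 1) := by
  cases m with
  | zero => decide
  | succ m => exact aSeq_add_two m

namespace SignedSymInv

section SignedInvolution

variable {α : Type*}

def IsSignedInvolution (f : α → α × Bool) : Prop :=
  ∀ i, f (f i).1 = (i, (f i).2)

lemma IsSignedInvolution.apply_fst_apply {f : α → α × Bool} {v w : α} {b : Bool}
    (hf : IsSignedInvolution f) (hfv : f v = (w, b)) : f w = (v, b) := by
  simpa [hfv] using hf v

variable [DecidableEq α]

open Function

def insertPair (g : α → α × Bool) (v w : α) (b : Bool) : α → α × Bool :=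
  update (update g v (w, b)) w (v, b)

def erasePair (f : α → α × Bool) (v w : α) : α → α × Bool :=
  update (update f v (v, false)) w (w, false)

variable {f g : α → α × Bool} {v w : α} {b : Bool}

lemma isSignedInvolution_insertPair (hg : IsSignedInvolution g) (hv : g v = (v, false))
    (hw : g w = (w, false)) : IsSignedInvolution (insertPair g v w b) := by
  intro i
  have := hg i
  simp only [insertPair, update_apply]
  grind

lemma isSignedInvolution_erasePair (hf : IsSignedInvolution f) (hfv : f v = (w, b)) :
    IsSignedInvolution (erasePair f v w) := by
  intro i
  have hfw := hf.apply_fst_apply hfv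
  have := hf i
  simp only [erasePair, update_apply]
  grind

lemma insertPair_apply_left : insertPair g v w b v = (w, b) := by
  by_cases hvw : v = w <;> simp [insertPair, hvw]

lemma erasePair_insertPair (hv : g v = (v, false)) (hw : g w = (w, false)) :
    erasePair (insertPair g v w b) v w = g := by
  ext1 i
  simp only [erasePair, insertPair, update_apply]
  grind

lemma insertPair_erasePair (hf : IsSignedInvolution f) (hfv : f v = (w, b)) :
    insertPair (erasePair f v w) v w b = f := by
  have hfw := hf.apply_fst_apply hfv
  ext1 i
  simp only [erasePair, insertPair, update_apply]
  grind

variable [Fintype α]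

instance (f : α → α × Bool) : Decidable (IsSignedInvolution f) := by
  unfold IsSignedInvolution; infer_instance

def support (f : α → α × Bool) : Finset α := {i | f i ≠ (i, false)}

@[simp] lemma mem_support : v ∈ support f ↔ f v ≠ (v, false) := by
  simp [support]

lemma not_mem_support : v ∉ support f ↔ f v = (v, false) := by
  simp

lemma support_insertPair (hwb : (w, b) ≠ (v, false)) :
    support (insertPair g v w b) = insert v (insert w (support g)) := by
  ext i
  simp only [mem_support, insertPair, update_apply, mem_insert]
  grind

lemma support_erasePair : support (erasePair f v w) = ((support f).erase v).erase w := by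
  ext i
  simp only [mem_support, erasePair, update_apply, mem_erase]
  grind

def signedInvolutionsOn (S : Finset α) : Finset (α → α × Bool) :=
  {f | IsSignedInvolution f ∧ support f = S}

@[simp] lemma mem_signedInvolutionsOn {S : Finset α} :
    f ∈ signedInvolutionsOn S ↔ IsSignedInvolution f ∧ support f = S := by
  simp [signedInvolutionsOn]

variable {S : Finset α}

lemma card_filter_signedInvolutionsOn_apply_eq (hv : v ∈ S) (hw : w ∈ S)
    (hwb : (w, b) ≠ (v, false)) :
    #{f ∈ signedInvolutionsOn S | f v = (w, b)} = #(signedInvolutionsOn ((S.erase v).erase w)) := by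
  refine card_nbij' (erasePair · v w) (insertPair · v w b) ?_ ?_ ?_ ?_ <;>
    intro f hf <;> simp only [mem_coe, mem_filter, mem_signedInvolutionsOn] at hf ⊢
  · exact ⟨isSignedInvolution_erasePair hf.1.1 hf.2, by rw [support_erasePair, hf.1.2]⟩
  · have hv' := not_mem_support.mp (by simp [hf.2] : v ∉ support f)
    have hw' := not_mem_support.mp (by simp [hf.2] : w ∉ support f)
    refine ⟨⟨isSignedInvolution_insertPair hf.1 hv' hw', ?_⟩, insertPair_apply_left⟩
    rw [support_insertPair hwb, hf.2]
    ext i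
    simp only [mem_insert, mem_erase]
    grind
  · exact insertPair_erasePair hf.1.1 hf.2
  · exact erasePair_insertPair (not_mem_support.mp (by simp [hf.2]))
      (not_mem_support.mp (by simp [hf.2]))

lemma apply_mem_of_mem_signedInvolutionsOn (hf : f ∈ signedInvolutionsOn S) (hv : v ∈ S) :
    f v ∈ insert (v, true) ((S.erase v) ×ˢ univ) := by
  rw [mem_signedInvolutionsOn] at hf
  rcases hfv : f v with ⟨w, b⟩
  have hfw := hf.1.apply_fst_apply hfv
  have hvf : f v ≠ (v, false) := mem_support.mp (hf.2 ▸ hv)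
  by_cases hwv : w = v
  · subst hwv
    cases b <;> simp_all
  · have : w ∈ support f := by simp [hfw, Ne.symm hwv]
    simp_all

lemma card_signedInvolutionsOn_of_mem (hv : v ∈ S) :
    #(signedInvolutionsOn S) = #(signedInvolutionsOn (S.erase v))
      + 2 * ∑ w ∈ S.erase v, #(signedInvolutionsOn ((S.erase v).erase w)) := by
  rw [card_eq_sum_card_fiberwise fun f hf => apply_mem_of_mem_signedInvolutionsOn hf hv,
    sum_insert (by simp), sum_product, mul_sum,
    card_filter_signedInvolutionsOn_apply_eq hv hv (by simp), erase_idem]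
  congr 1
  refine sum_congr rfl fun w hw => ?_
  have hwS := mem_of_mem_erase hw
  have hwv := ne_of_mem_erase hw
  rw [Fintype.sum_bool, two_mul, card_filter_signedInvolutionsOn_apply_eq hv hwS (by simp [hwv]),
    card_filter_signedInvolutionsOn_apply_eq hv hwS (by simp [hwv])]

theorem card_signedInvolutionsOn (S : Finset α) : #(signedInvolutionsOn S) = aSeq #S := by
  induction h : #S using Nat.strong_induction_on generalizing S with
  | _ m ih =>
  rcases S.eq_empty_or_nonempty with rfl | ⟨v, hv⟩
  · subst h
    rw [show signedInvolutionsOn (∅ : Finset α) = {fun i => (i, false)} by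
      ext f
      simp +contextual [IsSignedInvolution, support, filter_eq_empty_iff, funext_iff]]
    rw [card_singleton, card_empty]
    rfl
  · obtain ⟨m, rfl⟩ : ∃ m', m = m' + 1 := ⟨m - 1, by have := card_pos.mpr ⟨v, hv⟩; omega⟩
    have hcard : #(S.erase v) = m := by rw [card_erase_of_mem hv, h]; rfl
    rw [card_signedInvolutionsOn_of_mem hv, ih m (by omega) _ hcard,
      sum_congr rfl fun w hw => ih (m - 1) (by omega) _ (by rw [card_erase_of_mem hw, hcard]),
      sum_const, hcard, smul_eq_mul, aSeq_succ]
    ring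

theorem card_filter_isSignedInvolution_card_support (k : ℕ) :
    #{f : α → α × Bool | IsSignedInvolution f ∧ #(support f) = k}
      = (Fintype.card α).choose k * aSeq k := by
  rw [card_eq_sum_card_fiberwise (f := support) (t := powersetCard k univ)
      fun f hf => by simp_all, ← card_univ, ← card_powersetCard, card_eq_sum_ones, sum_mul,
    one_mul]
  refine sum_congr rfl fun S hS => ?_
  rw [mem_powersetCard] at hS
  rw [← hS.2, ← card_signedInvolutionsOn, signedInvolutionsOn, filter_filter]
  exact congrArg card (filter_congr fun f _ => by grind)

end SignedInvolution

lemma card_filter_prod_eq_sum {A B : Type*} [Fintype A] [Fintype B] (P : A → Prop)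
    (Q : A → B → Prop) [DecidablePred P] [∀ a, DecidablePred (Q a)] :
    #{x : A × B | P x.1 ∧ Q x.1 x.2} = ∑ a ∈ {a | P a}, #{b | Q a b} := by
  simp only [card_filter, Fintype.sum_prod_type, sum_filter, ite_and, sum_ite_irrel, sum_const_zero]

lemma card_filter_equiv {β γ : Type*} [Fintype β] [Fintype γ] (e : β ≃ γ) (p : γ → Prop)
    [DecidablePred p] :
    #{x | p (e x)} = #{y | p y} :=
  card_equiv e (by simp)

section Symmetric

variable {β : Type*}

def IsSymmetricInvolution (r : β → β) (π : Perm β) : Prop :=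
  π * π = 1 ∧ ∀ i, π (r i) = r (π i)

def IsSymmetricSigning (r : β → β) (π : Perm β) (ε : β → Bool) : Prop :=
  (∀ i, π i ≠ i → ε i = false) ∧ ∀ i, π i = i → ε (r i) = ε i

lemma IsSymmetricInvolution.apply_apply {r : β → β} {π : Perm β}
    (hπ : IsSymmetricInvolution r π) (x : β) : π (π x) = x := by
  simpa using congr($(hπ.1) x)

variable [Fintype β] [DecidableEq β]

instance (r : β → β) (π : Perm β) : Decidable (IsSymmetricInvolution r π) := by
  unfold IsSymmetricInvolution; infer_instance

instance (r : β → β) (π : Perm β) (ε : β → Bool) : Decidable (IsSymmetricSigning r π ε) := by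
  unfold IsSymmetricSigning; infer_instance

def IsSignedSymmetricInvolution (r : β → β) (D : ℕ) (π : Perm β) (ε : β → Bool) : Prop :=
  IsSymmetricInvolution r π ∧ IsSymmetricSigning r π ε ∧
    #{i | π i = i ∧ ε i = true} = #{i | π i = i ∧ ε i = false} + D

instance (r : β → β) (D : ℕ) (π : Perm β) (ε : β → Bool) :
    Decidable (IsSignedSymmetricInvolution r D π ε) := by
  unfold IsSignedSymmetricInvolution; infer_instance

def signedSymmetricCount (r : β → β) (D k : ℕ) : ℕ :=
  #{x : Perm β × (β → Bool) | IsSignedSymmetricInvolution r D x.1 x.2 ∧ #{i | x.1 i ≠ i} = 2 * k}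

lemma signedSymmetricCount_eq_sum (r : β → β) (D k : ℕ) :
    signedSymmetricCount r D k
      = ∑ π ∈ {π : Perm β | IsSymmetricInvolution r π ∧ #{i | π i ≠ i} = 2 * k},
          #{ε | IsSymmetricSigning r π ε ∧
            #{i | π i = i ∧ ε i = true} = #{i | π i = i ∧ ε i = false} + D} := by
  rw [signedSymmetricCount, ← card_filter_prod_eq_sum]
  simp only [IsSignedSymmetricInvolution, and_right_comm, and_assoc]

variable {γ : Type*} [Fintype γ] [DecidableEq γ]

lemma IsSignedSymmetricInvolution.permCongr {r : β → β} {r' : γ → γ} {D : ℕ} {π : Perm β}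
    {ε : β → Bool} (h : IsSignedSymmetricInvolution r D π ε) (e : β ≃ γ)
    (he : ∀ x, e (r x) = r' (e x)) :
    IsSignedSymmetricInvolution r' D (e.permCongr π) (ε ∘ e.symm) := by
  obtain ⟨⟨hinv, hcomm⟩, ⟨hoff, hsymm⟩, hcount⟩ := h
  have hπ (x : β) : e.permCongr π (e x) = e (π x) := by simp [Equiv.permCongr_apply]
  refine ⟨⟨by rw [← permCongr_mul, hinv]; exact e.permCongr_refl,
      e.surjective.forall.mpr fun x => ?_⟩,
    ⟨e.surjective.forall.mpr fun x => ?_, e.surjective.forall.mpr fun x => ?_⟩, ?_⟩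
  · rw [← he, hπ, hπ, hcomm, he]
  · simpa [hπ] using hoff x
  · simpa [← he, hπ] using hsymm x
  · rw [← card_filter_equiv e, ← card_filter_equiv e]
    simpa [hπ] using hcount

lemma card_filter_permCongr_ne (e : β ≃ γ) (π : Perm β) :
    #{y | e.permCongr π y ≠ y} = #{x | π x ≠ x} := by
  rw [← card_filter_equiv e]
  simp [Equiv.permCongr_apply]

lemma signedSymmetricCount_congr (e : β ≃ γ) {r : β → β} {r' : γ → γ}
    (he : ∀ x, e (r x) = r' (e x)) (D k : ℕ) :
    signedSymmetricCount r D k = signedSymmetricCount r' D k := by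
  have he' (y : γ) : e.symm (r' y) = r (e.symm y) := by
    rw [e.symm_apply_eq, he, e.apply_symm_apply]
  refine card_nbij' (fun x => (e.permCongr x.1, x.2 ∘ e.symm))
    (fun y => (e.symm.permCongr y.1, y.2 ∘ e)) ?_ ?_ ?_ ?_
  · rintro ⟨π, ε⟩ h
    simp only [mem_coe, mem_filter, mem_univ, true_and] at h ⊢
    exact ⟨h.1.permCongr e he, by rw [card_filter_permCongr_ne, h.2]⟩
  · rintro ⟨π, ε⟩ h
    simp only [mem_coe, mem_filter, mem_univ, true_and] at h ⊢
    exact ⟨h.1.permCongr e.symm he', by rw [card_filter_permCongr_ne, h.2]⟩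
  · rintro ⟨π, ε⟩ -
    ext <;> simp [Equiv.permCongr_apply, Function.comp_def]
  · rintro ⟨π, ε⟩ -
    ext <;> simp [Equiv.permCongr_apply, Function.comp_def]

lemma signedSymInvCount_eq_signedSymmetricCount (p q k : ℕ) :
    signedSymInvCount p q k
      = signedSymmetricCount (Fin.rev : Fin (2 * (p + q) + 1) → _) (2 * p - (2 * q + 1)) k := by
  classical
  rw [signedSymInvCount, Nat.card_eq_fintype_card, Fintype.card_subtype, signedSymmetricCount]
  refine congrArg card (filter_congr fun x _ => ?_)
  simp only [IsSignedSymInv, IsSignedSymmetricInvolution, IsSymmetricInvolution,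
    IsSymmetricSigning, and_assoc]

end Symmetric

section SignedPoints

variable {α : Type*}

def neg : Option (α × Bool) → Option (α × Bool) := Option.map fun y => (y.1, !y.2)

@[simp] lemma neg_none : neg (none : Option (α × Bool)) = none := rfl

@[simp] lemma neg_some (y : α × Bool) : neg (some y) = some (y.1, !y.2) := rfl

-- A symmetric involution fixes `none`, hence maps `some _` to `some _`: the default is never used.
def toSignedInvolution (π : Perm (Option (α × Bool))) (i : α) : α × Bool :=
  (π (some (i, false))).getD (i, false)

def ofSignedInvolution (f : α → α × Bool) : Option (α × Bool) → Option (α × Bool)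
  | none => none
  | some (i, b) => some ((f i).1, (f i).2 ^^ b)

variable {π : Perm (Option (α × Bool))} {f : α → α × Bool}

lemma IsSymmetricInvolution.apply_none (hπ : IsSymmetricInvolution neg π) : π none = none := by
  have h := hπ.2 none
  rcases hx : π none with _ | ⟨i, b⟩
  · rfl
  · rw [neg_none, hx] at h
    cases b <;> simp at h

lemma IsSymmetricInvolution.apply_some (hπ : IsSymmetricInvolution neg π) (i : α) (b : Bool) :
    π (some (i, b)) = ofSignedInvolution (toSignedInvolution π) (some (i, b)) := by
  have hfalse : π (some (i, false)) = some (toSignedInvolution π i) := by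
    rcases hx : π (some (i, false)) with _ | y
    · rw [← hπ.apply_none] at hx
      cases π.injective hx
    · simp [toSignedInvolution, hx]
  cases b
  · simpa [ofSignedInvolution] using hfalse
  · simpa [ofSignedInvolution, hfalse] using hπ.2 (some (i, false))

lemma IsSymmetricInvolution.coe_eq_ofSignedInvolution (hπ : IsSymmetricInvolution neg π) :
    ⇑π = ofSignedInvolution (toSignedInvolution π) := by
  funext x
  rcases x with _ | ⟨i, b⟩
  · exact hπ.apply_none
  · exact hπ.apply_some i b

lemma IsSymmetricInvolution.isSignedInvolution (hπ : IsSymmetricInvolution neg π) :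
    IsSignedInvolution (toSignedInvolution π) := by
  intro i
  have h := hπ.apply_apply (some (i, false))
  rw [hπ.coe_eq_ofSignedInvolution] at h
  simpa [ofSignedInvolution, Prod.ext_iff] using h

lemma IsSignedInvolution.ofSignedInvolution_involutive (hf : IsSignedInvolution f) :
    Function.Involutive (ofSignedInvolution f) := by
  rintro (_ | ⟨i, b⟩)
  · rfl
  · simp [ofSignedInvolution, hf i]

lemma ofSignedInvolution_neg (x : Option (α × Bool)) :
    ofSignedInvolution f (neg x) = neg (ofSignedInvolution f x) := by
  rcases x with _ | ⟨i, b⟩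
  · rfl
  · simp [ofSignedInvolution]

lemma toSignedInvolution_ofSignedInvolution (hf : IsSignedInvolution f) :
    toSignedInvolution (hf.ofSignedInvolution_involutive.toPerm (ofSignedInvolution f)) = f := by
  funext i
  simp [toSignedInvolution, ofSignedInvolution]

variable [Fintype α]

lemma card_filter_option_prod_bool (p : Option (α × Bool) → Prop) [DecidablePred p] :
    #{x | p x} = (if p none then 1 else 0)
      + ∑ i, ((if p (some (i, false)) then 1 else 0) + if p (some (i, true)) then 1 else 0) := by
  simp only [card_filter, Fintype.sum_option, Fintype.sum_prod_type, Fintype.sum_bool, add_comm]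

variable [DecidableEq α]

lemma card_ofSignedInvolution_ne :
    #{x | ofSignedInvolution f x ≠ x} = 2 * #(support f) := by
  rw [card_filter_option_prod_bool, support, card_filter, mul_sum]
  refine (zero_add _).trans (sum_congr rfl fun i _ => ?_)
  rcases hfi : f i with ⟨j, c⟩
  cases c <;> by_cases hji : j = i <;> simp [ofSignedInvolution, hfi, hji]

theorem card_symmetricInvolutions_eq_card_signedInvolutions (k : ℕ) :
    #{π : Perm (Option (α × Bool)) | IsSymmetricInvolution neg π ∧ #{x | π x ≠ x} = 2 * k}
      = #{f : α → α × Bool | IsSignedInvolution f ∧ #(support f) = k} := by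
  refine card_bij' (fun π _ => toSignedInvolution π)
    (fun f hf => (mem_filter.mp hf).2.1.ofSignedInvolution_involutive.toPerm
      (ofSignedInvolution f)) ?_ ?_ ?_ ?_
  · intro π hπ
    simp only [mem_filter, mem_univ, true_and] at hπ ⊢
    refine ⟨hπ.1.isSignedInvolution, ?_⟩
    have := hπ.2
    rw [hπ.1.coe_eq_ofSignedInvolution, card_ofSignedInvolution_ne] at this
    omega
  · intro f hf
    simp only [mem_filter, mem_univ, true_and] at hf ⊢
    refine ⟨⟨Equiv.ext fun x => hf.1.ofSignedInvolution_involutive x, ofSignedInvolution_neg⟩, ?_⟩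
    rw [Function.Involutive.coe_toPerm, card_ofSignedInvolution_ne, hf.2]
  · intro π hπ
    exact Equiv.ext fun x => congr_fun (mem_filter.mp hπ).2.1.coe_eq_ofSignedInvolution.symm x
  · intro f hf
    exact toSignedInvolution_ofSignedInvolution (mem_filter.mp hf).2.1

def signOf (s : Bool) (A : Finset α) : Option (α × Bool) → Bool
  | none => s
  | some (i, _) => decide (i ∈ A)

def positivePart (ε : Option (α × Bool) → Bool) : Finset α := {i | ε (some (i, false)) = true}

variable {ε : Option (α × Bool) → Bool} {s : Bool} {A : Finset α}

lemma card_signOf : #{x | signOf s A x = true} = s.toNat + 2 * #A := by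
  rw [card_filter_option_prod_bool]
  cases s <;> simp [signOf, ← two_mul, mul_comm]

lemma positivePart_signOf : positivePart (signOf s A) = A := by
  ext i
  simp [positivePart, signOf]

lemma IsSymmetricInvolution.apply_some_eq_self_iff (hπ : IsSymmetricInvolution neg π) {i : α}
    {b : Bool} : π (some (i, b)) = some (i, b) ↔ i ∉ support (toSignedInvolution π) := by
  rw [hπ.coe_eq_ofSignedInvolution]
  cases b <;> simp [ofSignedInvolution, Prod.ext_iff]

lemma IsSymmetricSigning.eq_signOf (hπ : IsSymmetricInvolution neg π)
    (hε : IsSymmetricSigning neg π ε) : ε = signOf (ε none) (positivePart ε) := by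
  funext x
  rcases x with _ | ⟨i, _ | _⟩
  · rfl
  · simp [signOf, positivePart]
  · simp only [signOf, positivePart, mem_filter, mem_univ, true_and]
    by_cases hi : i ∈ support (toSignedInvolution π)
    · rw [hε.1 _ (hπ.apply_some_eq_self_iff.not_left.mpr hi),
        hε.1 _ (hπ.apply_some_eq_self_iff.not_left.mpr hi)]
      rfl
    · simpa using hε.2 _ (hπ.apply_some_eq_self_iff (b := false) |>.mpr hi)

lemma IsSymmetricSigning.positivePart_subset (hπ : IsSymmetricInvolution neg π)
    (hε : IsSymmetricSigning neg π ε) : positivePart ε ⊆ (support (toSignedInvolution π))ᶜ := by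
  intro i hi
  rw [mem_compl, ← hπ.apply_some_eq_self_iff (b := false)]
  by_contra h
  simp [positivePart, hε.1 _ h] at hi

lemma isSymmetricSigning_signOf (hπ : IsSymmetricInvolution neg π)
    (hA : A ⊆ (support (toSignedInvolution π))ᶜ) : IsSymmetricSigning neg π (signOf s A) := by
  refine ⟨?_, ?_⟩
  · rintro (_ | ⟨i, b⟩) h
    · exact absurd hπ.apply_none h
    · by_contra hi
      exact h (hπ.apply_some_eq_self_iff.mpr (mem_compl.mp (hA (by simpa [signOf] using hi))))
  · rintro (_ | ⟨i, b⟩) _ <;> rfl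

theorem card_symmetricSignings (hπ : IsSymmetricInvolution neg π) (P : ℕ) :
    #{ε | IsSymmetricSigning neg π ε ∧ #{x | π x = x ∧ ε x = true} = P}
      = Nat.choose #(support (toSignedInvolution π))ᶜ (P / 2) := by
  have hplus : ∀ ε, IsSymmetricSigning neg π ε →
      #{x | π x = x ∧ ε x = true} = #{x | ε x = true} := fun ε hε => by
    congr 1
    ext x
    simp only [mem_filter, mem_univ, true_and, and_iff_right_iff_imp]
    exact fun h => by_contra fun hx => by simp [hε.1 x hx] at h
  -- the sign at `none` is forced to be the parity of `P`
  rw [← card_powersetCard, ← one_mul #(powersetCard _ _), ← card_singleton (decide (P % 2 = 1)),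
    ← card_product]
  refine card_bij' (fun ε _ => (ε none, positivePart ε)) (fun y _ => signOf y.1 y.2) ?_ ?_ ?_ ?_
  · intro ε hε
    simp only [mem_filter, mem_univ, true_and] at hε
    have hP := hε.2
    rw [hplus ε hε.1, hε.1.eq_signOf hπ, card_signOf] at hP
    simp only [mem_product, mem_singleton, mem_powersetCard]
    have hs := Bool.toNat_le (ε none)
    refine ⟨?_, hε.1.positivePart_subset hπ, by omega⟩
    cases h : ε none <;> simp [h] at hP ⊢ <;> omega
  · rintro ⟨s, A⟩ h
    simp only [mem_product, mem_singleton, mem_powersetCard] at h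
    have hsig := isSymmetricSigning_signOf (s := s) hπ h.2.1
    simp only [mem_filter, mem_univ, true_and]
    refine ⟨hsig, ?_⟩
    rw [hplus _ hsig, card_signOf, h.2.2, h.1]
    by_cases hP : P % 2 = 1 <;> simp [hP] <;> omega
  · intro ε hε
    exact ((mem_filter.mp hε).2.1.eq_signOf hπ).symm
  · rintro ⟨s, A⟩ _
    simp [signOf, positivePart_signOf]

theorem card_balancedSignings (hπ : IsSymmetricInvolution neg π) {D k P : ℕ}
    (hk : #{x | π x ≠ x} = 2 * k) (hP : 2 * P + 2 * k = 2 * Fintype.card α + 1 + D) :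
    #{ε | IsSymmetricSigning neg π ε ∧
        #{x | π x = x ∧ ε x = true} = #{x | π x = x ∧ ε x = false} + D}
      = (Fintype.card α - k).choose (P / 2) := by
  have hsupp : #(support (toSignedInvolution π)) = k := by
    rw [hπ.coe_eq_ofSignedInvolution, card_ofSignedInvolution_ne] at hk
    omega
  have hkα : k ≤ Fintype.card α := hsupp ▸ card_le_univ _
  have hfix : #{x | π x = x} + 2 * k = 2 * Fintype.card α + 1 := by
    rw [← hk, card_filter_add_card_filter_not, card_univ, Fintype.card_option,
      Fintype.card_prod, Fintype.card_bool]
    ring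
  rw [← hsupp, ← card_compl, ← card_symmetricSignings hπ P]
  refine congrArg card (filter_congr fun ε _ => and_congr_right fun _ => ?_)
  have hsplit : #{x | π x = x ∧ ε x = true} + #{x | π x = x ∧ ε x = false} = #{x | π x = x} := by
    rw [← card_filter_add_card_filter_not (s := {x | π x = x}) (fun x => ε x = true),
      filter_filter, filter_filter]
    simp only [Bool.not_eq_true]
  omega

theorem signedSymmetricCount_neg {D k P : ℕ} (hP : 2 * P + 2 * k = 2 * Fintype.card α + 1 + D) :
    signedSymmetricCount (neg (α := α)) D k
      = (Fintype.card α).choose k * aSeq k * (Fintype.card α - k).choose (P / 2) := by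
  rw [signedSymmetricCount_eq_sum, sum_congr rfl fun π hπ =>
      card_balancedSignings (mem_filter.mp hπ).2.1 (mem_filter.mp hπ).2.2 hP,
    sum_const, smul_eq_mul, card_symmetricInvolutions_eq_card_signedInvolutions,
    card_filter_isSignedInvolution_card_support]

end SignedPoints

def finCoord (n : ℕ) : Option (Fin n × Bool) ≃ Fin (2 * n + 1) where
  toFun
    | none => ⟨n, by omega⟩
    | some (i, false) => ⟨i, by omega⟩
    | some (i, true) => ⟨2 * n - i, by omega⟩
  invFun x :=
    if h : x.val < n then some (⟨x, h⟩, false)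
    else if h' : n < x.val then some (⟨2 * n - x, by omega⟩, true) else none
  left_inv := by
    rintro (_ | ⟨i, _ | _⟩)
    · simp
    · simp
    · have := i.isLt
      simp only [dif_neg (show ¬ 2 * n - i.val < n by omega),
        dif_pos (show n < 2 * n - i.val by omega), Option.some.injEq, Prod.mk.injEq, and_true,
        Fin.ext_iff]
      omega
  right_inv x := by
    by_cases h : x.val < n
    · simp [h]
    · by_cases h' : n < x.val
      · simp only [h, h', dif_neg, dif_pos, not_false_eq_true]
        ext; simp; omega
      · simp only [h, h', dif_neg, not_false_eq_true]
        ext; simp; omega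

lemma finCoord_neg {n : ℕ} (x : Option (Fin n × Bool)) :
    finCoord n (neg x) = (finCoord n x).rev := by
  rcases x with _ | ⟨i, _ | _⟩ <;> ext <;> simp [finCoord, Fin.val_rev] <;> omega

end SignedSymInv

open SignedSymInv in
theorem count_signed_symmetric_involutions_with_k_pairs
    (p q k : ℕ) (hpq : q < p) (hk : k ≤ 2 * q + 1) :
    (∀ l : ℕ, k = 2 * l →
      signedSymInvCount p q k
        = Nat.choose (p + q - 2 * l) (p - l) * Nat.choose (p + q) (2 * l) * aSeq (2 * l)) ∧
    (∀ l : ℕ, k = 2 * l + 1 →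
      signedSymInvCount p q k
        = Nat.choose (p + q - (2 * l + 1)) (p - (l + 1)) * Nat.choose (p + q) (2 * l + 1)
            * aSeq (2 * l + 1)) := by
  have hcount : signedSymInvCount p q k
      = (p + q).choose k * aSeq k * (p + q - k).choose ((2 * p - k) / 2) := by
    rw [signedSymInvCount_eq_signedSymmetricCount,
      ← signedSymmetricCount_congr (finCoord (p + q)) finCoord_neg,
      signedSymmetricCount_neg (P := 2 * p - k) (by rw [Fintype.card_fin]; omega),
      Fintype.card_fin]
  refine ⟨fun l hl => ?_, fun l hl => ?_⟩ <;> subst hl <;> rw [hcount]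
  · rw [show (2 * p - 2 * l) / 2 = p - l by omega]
    ring
  · rw [show (2 * p - (2 * l + 1)) / 2 = p - (l + 1) by omega]
    ring
end

section
/- For all nonnegative integers p, q, l the following identities hold: (i) if l ≤ q and l+1 ≤ p, then (p+q)·β(2l,p−1,q) = (p−l)·β(2l,p,q); (ii) if l+1 ≤ q and l ≤ p, then (p+q)·β(2l,p,q−1) = (q−l)·β(2l,p,q); (iii) if l ≤ q and l+2 ≤ p, then (p+q)·β(2l+1,p−1,q) = (p−l−1)·β(2l+1,p,q); (iv) if l+1 ≤ q and l+1 ≤ p, then (p+q)·β(2l+1,p,q−1) = (q−l)·β(2l+1,p,q). -/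
/-- `beta k p q` : for `k = 2l` even it is `C(n-2l, p-l)·C(n, 2l)·aSeq(2l)` when
`l ≤ min(p,q)` and `0` otherwise; for `k = 2l+1` odd it is
`C(n-2l-1, p-l-1)·C(n, 2l+1)·aSeq(2l+1)` when `l ≤ q` and `l+1 ≤ p`, and `0` otherwise.
Here `n = p + q`. -/
def beta (k p q : ℕ) : ℕ :=
  if k % 2 = 0 then
    if k / 2 ≤ p ∧ k / 2 ≤ q then
      Nat.choose (p + q - 2 * (k / 2)) (p - k / 2) * Nat.choose (p + q) (2 * (k / 2))
        * aSeq (2 * (k / 2))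
    else 0
  else
    if k / 2 ≤ q ∧ k / 2 + 1 ≤ p then
      Nat.choose (p + q - (2 * (k / 2) + 1)) (p - (k / 2 + 1))
        * Nat.choose (p + q) (2 * (k / 2) + 1) * aSeq (2 * (k / 2) + 1)
    else 0

lemma core1 (a b m : ℕ) :
    (m + a + b + 1) * (Nat.choose (a + b) a * Nat.choose (m + a + b) m) =
    (a + 1) * (Nat.choose (a + b + 1) (a + 1) * Nat.choose (m + a + b + 1) m) := by
  have h1 := Nat.choose_mul_succ_eq (m + a + b) m
  have h1' : Nat.choose (m + a + b) m * (m + a + b + 1)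
      = Nat.choose (m + a + b + 1) m * (a + b + 1) := by
    rw [h1]; congr 1; omega
  have h2 : (a + b + 1) * Nat.choose (a + b) a
      = Nat.choose (a + b + 1) (a + 1) * (a + 1) := Nat.add_one_mul_choose_eq (a + b) a
  calc (m + a + b + 1) * (Nat.choose (a + b) a * Nat.choose (m + a + b) m)
      = Nat.choose (a + b) a * (Nat.choose (m + a + b) m * (m + a + b + 1)) := by ring
    _ = Nat.choose (a + b) a * (Nat.choose (m + a + b + 1) m * (a + b + 1)) := by rw [h1']
    _ = Nat.choose (m + a + b + 1) m * ((a + b + 1) * Nat.choose (a + b) a) := by ring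
    _ = Nat.choose (m + a + b + 1) m * (Nat.choose (a + b + 1) (a + 1) * (a + 1)) := by rw [h2]
    _ = _ := by ring

lemma core2 (a b m : ℕ) :
    (m + a + b + 1) * (Nat.choose (a + b) a * Nat.choose (m + a + b) m) =
    (b + 1) * (Nat.choose (a + b + 1) a * Nat.choose (m + a + b + 1) m) := by
  have h1 := Nat.choose_mul_succ_eq (m + a + b) m
  have h1' : Nat.choose (m + a + b) m * (m + a + b + 1)
      = Nat.choose (m + a + b + 1) m * (a + b + 1) := by
    rw [h1]; congr 1; omega
  have s1 : Nat.choose (a + b) a = Nat.choose (a + b) b := by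
    rw [← Nat.choose_symm (show b ≤ a + b by omega)]; congr 1; omega
  have s2 : Nat.choose (a + b + 1) a = Nat.choose (a + b + 1) (b + 1) := by
    rw [← Nat.choose_symm (show b + 1 ≤ a + b + 1 by omega)]; congr 1; omega
  have h2 : (a + b + 1) * Nat.choose (a + b) a
      = Nat.choose (a + b + 1) a * (b + 1) := by
    rw [s1, s2]; exact Nat.add_one_mul_choose_eq (a + b) b
  calc (m + a + b + 1) * (Nat.choose (a + b) a * Nat.choose (m + a + b) m)
      = Nat.choose (a + b) a * (Nat.choose (m + a + b) m * (m + a + b + 1)) := by ring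
    _ = Nat.choose (a + b) a * (Nat.choose (m + a + b + 1) m * (a + b + 1)) := by rw [h1']
    _ = Nat.choose (m + a + b + 1) m * ((a + b + 1) * Nat.choose (a + b) a) := by ring
    _ = Nat.choose (m + a + b + 1) m * (Nat.choose (a + b + 1) a * (b + 1)) := by rw [h2]
    _ = _ := by ring

lemma beta_even (l p q : ℕ) (h1 : l ≤ p) (h2 : l ≤ q) :
    beta (2 * l) p q
      = Nat.choose (p + q - 2 * l) (p - l) * Nat.choose (p + q) (2 * l) * aSeq (2 * l) := by
  have e1 : 2 * l % 2 = 0 := Nat.mul_mod_right 2 l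
  have e2 : 2 * l / 2 = l := by omega
  simp [beta, e1, e2, h1, h2]

lemma beta_odd (l p q : ℕ) (h1 : l ≤ q) (h2 : l + 1 ≤ p) :
    beta (2 * l + 1) p q
      = Nat.choose (p + q - (2 * l + 1)) (p - (l + 1)) * Nat.choose (p + q) (2 * l + 1)
        * aSeq (2 * l + 1) := by
  have e1 : (2 * l + 1) % 2 = 1 := by omega
  have e2 : (2 * l + 1) / 2 = l := by omega
  simp [beta, e1, e2, h1, h2]

theorem beta_linear_recurrences (p q l : ℕ) :
    (l ≤ q → l + 1 ≤ p →
      (p + q) * beta (2 * l) (p - 1) q = (p - l) * beta (2 * l) p q) ∧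
    (l + 1 ≤ q → l ≤ p →
      (p + q) * beta (2 * l) p (q - 1) = (q - l) * beta (2 * l) p q) ∧
    (l ≤ q → l + 2 ≤ p →
      (p + q) * beta (2 * l + 1) (p - 1) q = (p - l - 1) * beta (2 * l + 1) p q) ∧
    (l + 1 ≤ q → l + 1 ≤ p →
      (p + q) * beta (2 * l + 1) p (q - 1) = (q - l) * beta (2 * l + 1) p q) := by
  refine ⟨?_, ?_, ?_, ?_⟩
  · intro hq hp
    obtain ⟨a, rfl⟩ : ∃ a, p = l + 1 + a := ⟨p - (l + 1), by omega⟩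
    obtain ⟨b, rfl⟩ : ∃ b, q = l + b := ⟨q - l, by omega⟩
    rw [beta_even l (l + 1 + a - 1) (l + b) (by omega) (by omega),
        beta_even l (l + 1 + a) (l + b) (by omega) (by omega)]
    simp only [show l + 1 + a - 1 + (l + b) - 2 * l = a + b from by omega,
      show l + 1 + a - 1 - l = a from by omega,
      show l + 1 + a + (l + b) - 2 * l = a + b + 1 from by omega,
      show l + 1 + a - l = a + 1 from by omega]
    simp only [show l + 1 + a - 1 + (l + b) = 2 * l + a + b from by omega,
      show l + 1 + a + (l + b) = 2 * l + a + b + 1 from by omega]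
    have h := core1 a b (2 * l)
    calc (2 * l + a + b + 1)
          * (Nat.choose (a + b) a * Nat.choose (2 * l + a + b) (2 * l) * aSeq (2 * l))
        = ((2 * l + a + b + 1) * (Nat.choose (a + b) a * Nat.choose (2 * l + a + b) (2 * l)))
            * aSeq (2 * l) := by ring
      _ = ((a + 1) * (Nat.choose (a + b + 1) (a + 1) * Nat.choose (2 * l + a + b + 1) (2 * l)))
            * aSeq (2 * l) := by rw [h]
      _ = _ := by ring
  · intro hq hp
    obtain ⟨a, rfl⟩ : ∃ a, p = l + a := ⟨p - l, by omega⟩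
    obtain ⟨b, rfl⟩ : ∃ b, q = l + 1 + b := ⟨q - (l + 1), by omega⟩
    rw [beta_even l (l + a) (l + 1 + b - 1) (by omega) (by omega),
        beta_even l (l + a) (l + 1 + b) (by omega) (by omega)]
    simp only [show l + a + (l + 1 + b - 1) - 2 * l = a + b from by omega,
      show l + a - l = a from by omega,
      show l + a + (l + 1 + b) - 2 * l = a + b + 1 from by omega,
      show l + 1 + b - l = b + 1 from by omega]
    simp only [show l + a + (l + 1 + b - 1) = 2 * l + a + b from by omega,
      show l + a + (l + 1 + b) = 2 * l + a + b + 1 from by omega]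
    have h := core2 a b (2 * l)
    calc (2 * l + a + b + 1)
          * (Nat.choose (a + b) a * Nat.choose (2 * l + a + b) (2 * l) * aSeq (2 * l))
        = ((2 * l + a + b + 1) * (Nat.choose (a + b) a * Nat.choose (2 * l + a + b) (2 * l)))
            * aSeq (2 * l) := by ring
      _ = ((b + 1) * (Nat.choose (a + b + 1) a * Nat.choose (2 * l + a + b + 1) (2 * l)))
            * aSeq (2 * l) := by rw [h]
      _ = _ := by ring
  · intro hq hp
    obtain ⟨a, rfl⟩ : ∃ a, p = l + 2 + a := ⟨p - (l + 2), by omega⟩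
    obtain ⟨b, rfl⟩ : ∃ b, q = l + b := ⟨q - l, by omega⟩
    rw [beta_odd l (l + 2 + a - 1) (l + b) (by omega) (by omega),
        beta_odd l (l + 2 + a) (l + b) (by omega) (by omega)]
    simp only [show l + 2 + a - 1 + (l + b) - (2 * l + 1) = a + b from by omega,
      show l + 2 + a - 1 - (l + 1) = a from by omega,
      show l + 2 + a + (l + b) - (2 * l + 1) = a + b + 1 from by omega,
      show l + 2 + a - (l + 1) = a + 1 from by omega,
      show l + 2 + a - l - 1 = a + 1 from by omega]
    simp only [show l + 2 + a - 1 + (l + b) = 2 * l + 1 + a + b from by omega,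
      show l + 2 + a + (l + b) = 2 * l + 1 + a + b + 1 from by omega]
    have h := core1 a b (2 * l + 1)
    calc (2 * l + 1 + a + b + 1)
          * (Nat.choose (a + b) a * Nat.choose (2 * l + 1 + a + b) (2 * l + 1)
              * aSeq (2 * l + 1))
        = ((2 * l + 1 + a + b + 1)
            * (Nat.choose (a + b) a * Nat.choose (2 * l + 1 + a + b) (2 * l + 1)))
            * aSeq (2 * l + 1) := by ring
      _ = ((a + 1) * (Nat.choose (a + b + 1) (a + 1)
              * Nat.choose (2 * l + 1 + a + b + 1) (2 * l + 1)))
            * aSeq (2 * l + 1) := by rw [h]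
      _ = _ := by ring
  · intro hq hp
    obtain ⟨a, rfl⟩ : ∃ a, p = l + 1 + a := ⟨p - (l + 1), by omega⟩
    obtain ⟨b, rfl⟩ : ∃ b, q = l + 1 + b := ⟨q - (l + 1), by omega⟩
    rw [beta_odd l (l + 1 + a) (l + 1 + b - 1) (by omega) (by omega),
        beta_odd l (l + 1 + a) (l + 1 + b) (by omega) (by omega)]
    simp only [show l + 1 + a + (l + 1 + b - 1) - (2 * l + 1) = a + b from by omega,
      show l + 1 + a - (l + 1) = a from by omega,
      show l + 1 + a + (l + 1 + b) - (2 * l + 1) = a + b + 1 from by omega,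
      show l + 1 + b - l = b + 1 from by omega]
    simp only [show l + 1 + a + (l + 1 + b - 1) = 2 * l + 1 + a + b from by omega,
      show l + 1 + a + (l + 1 + b) = 2 * l + 1 + a + b + 1 from by omega]
    have h := core2 a b (2 * l + 1)
    calc (2 * l + 1 + a + b + 1)
          * (Nat.choose (a + b) a * Nat.choose (2 * l + 1 + a + b) (2 * l + 1)
              * aSeq (2 * l + 1))
        = ((2 * l + 1 + a + b + 1)
            * (Nat.choose (a + b) a * Nat.choose (2 * l + 1 + a + b) (2 * l + 1)))
            * aSeq (2 * l + 1) := by ring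
      _ = ((b + 1) * (Nat.choose (a + b + 1) a
              * Nat.choose (2 * l + 1 + a + b + 1) (2 * l + 1)))
            * aSeq (2 * l + 1) := by rw [h]
      _ = _ := by ring
end

section
/- For every integer m ≥ 2, the numbers a(m) = Σ_{b=0}^{⌊m/2⌋} C(m,2b)·(2b)!/b! satisfy the recurrence a(m) = a(m−1) + 2(m−1)·a(m−2). -/
open Finset Nat

private def cval (b : ℕ) : ℕ := (2*b)! / b !

private lemma cval_mul (b : ℕ) : cval b * b ! = (2*b)! :=
  Nat.div_mul_cancel (Nat.factorial_dvd_factorial (by omega))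

private lemma cval_succ (b : ℕ) : cval (b+1) = 2*(2*b+1) * cval b := by
  have h1 := cval_mul (b+1)
  have key : 2*(2*b+1)*cval b * (b+1)! = (2*(b+1))! := by
    have e : 2*(b+1) = (2*b+1)+1 := by ring
    rw [e, Nat.factorial_succ, Nat.factorial_succ]
    calc 2*(2*b+1)*cval b * ((b+1)*b !)
        = ((2*b+1)+1)*(2*b+1)*(cval b * b !) := by ring
      _ = ((2*b+1)+1)*((2*b+1)*(2*b)!) := by rw [cval_mul]; ring
  exact Nat.eq_of_mul_eq_mul_right (Nat.factorial_pos (b+1)) (h1.trans key.symm)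

private lemma aSeq_eq (m : ℕ) :
    aSeq m = ∑ b ∈ Finset.range (m / 2 + 1), Nat.choose m (2 * b) * cval b := rfl

private lemma main (n : ℕ) : aSeq (n+2) = aSeq (n+1) + 2*(n+1)*aSeq n := by
  have hK : (n+2)/2 = n/2 + 1 := Nat.add_div_right n (by norm_num)
  rw [aSeq_eq, aSeq_eq, aSeq_eq, hK]
  rw [Finset.sum_range_succ']
  have step : ∀ i, Nat.choose (n+2) (2*(i+1)) * cval (i+1)
      = Nat.choose (n+1) (2*(i+1)) * cval (i+1) + 2*(n+1) * (Nat.choose n (2*i) * cval i) := by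
    intro i
    have pascal : Nat.choose (n+2) (2*(i+1))
        = Nat.choose (n+1) (2*i+1) + Nat.choose (n+1) (2*(i+1)) := by
      have e : 2*(i+1) = (2*i+1)+1 := by ring
      rw [e]
      exact Nat.choose_succ_succ (n+1) (2*i+1)
    have mul : (n+1) * Nat.choose n (2*i) = Nat.choose (n+1) (2*i+1) * (2*i+1) := by
      simpa using Nat.add_one_mul_choose_eq n (2*i)
    rw [pascal, cval_succ, add_mul]
    have key : Nat.choose (n+1) (2*i+1) * (2*(2*i+1) * cval i)
        = 2*(n+1) * (Nat.choose n (2*i) * cval i) := by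
      calc Nat.choose (n+1) (2*i+1) * (2*(2*i+1) * cval i)
          = 2 * (Nat.choose (n+1) (2*i+1) * (2*i+1)) * cval i := by ring
        _ = 2 * ((n+1) * Nat.choose n (2*i)) * cval i := by rw [← mul]
        _ = 2*(n+1) * (Nat.choose n (2*i) * cval i) := by ring
    rw [key, add_comm]
  rw [Finset.sum_congr rfl (fun i _ => step i), Finset.sum_add_distrib, ← Finset.mul_sum]
  have h0 : Nat.choose (n+2) (2*0) * cval 0 = Nat.choose (n+1) (2*0) * cval 0 := by simp
  rw [h0]
  have hs := Finset.sum_range_succ' (fun b => Nat.choose (n+1) (2*b) * cval b) (n/2+1)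
  have first : ∑ b ∈ Finset.range (n/2+1+1), Nat.choose (n+1) (2*b) * cval b
      = ∑ b ∈ Finset.range ((n+1)/2+1), Nat.choose (n+1) (2*b) * cval b := by
    rcases Nat.even_or_odd n with ⟨t, ht⟩ | ⟨t, ht⟩
    · have h1 : n/2+1+1 = ((n+1)/2+1)+1 := by omega
      have hz : Nat.choose (n+1) (2*((n+1)/2+1)) = 0 := Nat.choose_eq_zero_of_lt (by omega)
      rw [h1, Finset.sum_range_succ, hz, zero_mul, add_zero]
    · have h1 : n/2+1+1 = (n+1)/2+1 := by omega
      rw [h1]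
  have comb := hs.symm.trans first
  rw [add_right_comm, comb]

theorem aSeq_recurrence (m : ℕ) (hm : 2 ≤ m) :
    aSeq m = aSeq (m - 1) + 2 * (m - 1) * aSeq (m - 2) := by
  obtain ⟨n, rfl⟩ : ∃ n, m = n + 2 := ⟨m - 2, by omega⟩
  simpa using main n
end

section
/- For all integers l, p, q with 1 ≤ l ≤ q < p, the identity (2l+1)·β(2l+1,p,q) = (p−l)·β(2l,p,q) + 2(p−l)(q−l+1)·β(2l−1,p,q) holds. -/
lemma grec (b : ℕ) :
    (2 * (b + 1)).factorial / (b + 1).factorial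
      = 2 * (2 * b + 1) * ((2 * b).factorial / b.factorial) := by
  set G := (2 * b).factorial / b.factorial with hGdef
  have hG : G * b.factorial = (2 * b).factorial :=
    Nat.div_mul_cancel (Nat.factorial_dvd_factorial (by omega))
  have h2 : (2 * (b + 1)).factorial = (2 * (2 * b + 1) * G) * (b + 1).factorial := by
    rw [show 2 * (b + 1) = (2 * b) + 1 + 1 by ring, Nat.factorial_succ, Nat.factorial_succ,
      ← hG, Nat.factorial_succ]
    ring
  rw [h2, Nat.mul_div_cancel _ (Nat.factorial_pos _)]

lemma aSeq_rec (j : ℕ) :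
    aSeq (2 * j + 3) = aSeq (2 * j + 2) + (4 * j + 4) * aSeq (2 * j + 1) := by
  unfold aSeq
  have r1 : (2 * j + 3) / 2 + 1 = j + 1 + 1 := by omega
  have r2 : (2 * j + 2) / 2 + 1 = j + 1 + 1 := by omega
  have r3 : (2 * j + 1) / 2 + 1 = j + 1 := by omega
  rw [r1, r2, r3, Finset.sum_range_succ' _ (j + 1), Finset.sum_range_succ' _ (j + 1),
    Finset.mul_sum]
  have key : ∀ b ∈ Finset.range (j + 1),
      Nat.choose (2 * j + 3) (2 * (b + 1)) * ((2 * (b + 1)).factorial / (b + 1).factorial)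
      = Nat.choose (2 * j + 2) (2 * (b + 1)) * ((2 * (b + 1)).factorial / (b + 1).factorial)
        + (4 * j + 4) * (Nat.choose (2 * j + 1) (2 * b) * ((2 * b).factorial / b.factorial)) := by
    intro b _
    have pascal : Nat.choose (2 * j + 3) (2 * (b + 1))
        = Nat.choose (2 * j + 2) (2 * b + 1) + Nat.choose (2 * j + 2) (2 * (b + 1)) := by
      rw [show 2 * (b + 1) = (2 * b + 1) + 1 by ring,
        show 2 * j + 3 = (2 * j + 2) + 1 by ring]
      exact Nat.choose_succ_succ' (2 * j + 2) (2 * b + 1)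
    have h1 : (2 * j + 2) * Nat.choose (2 * j + 1) (2 * b)
        = Nat.choose (2 * j + 2) (2 * b + 1) * (2 * b + 1) := by
      have h := Nat.add_one_mul_choose_eq (2 * j + 1) (2 * b)
      rw [show 2 * j + 1 + 1 = 2 * j + 2 by ring] at h
      exact h
    rw [pascal, Nat.add_mul, grec b]
    have goal2 : Nat.choose (2 * j + 2) (2 * b + 1)
          * (2 * (2 * b + 1) * ((2 * b).factorial / b.factorial))
        = (4 * j + 4) * (Nat.choose (2 * j + 1) (2 * b) * ((2 * b).factorial / b.factorial)) := by
      have e1 : (4 * j + 4) * (Nat.choose (2 * j + 1) (2 * b) * ((2 * b).factorial / b.factorial))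
          = 2 * ((2 * j + 2) * Nat.choose (2 * j + 1) (2 * b))
            * ((2 * b).factorial / b.factorial) := by ring
      rw [e1, h1]; ring
    rw [goal2]
    exact Nat.add_comm _ _
  rw [Finset.sum_congr rfl key, Finset.sum_add_distrib]
  simp only [Nat.mul_zero, Nat.choose_zero_right, Nat.factorial_zero, Nat.div_one, Nat.mul_one,
    Nat.one_mul]
  omega

lemma I3 (n k : ℕ) : (n + 1) * Nat.choose n k = Nat.choose (n + 1) k * (n + 1 - k) := by
  have a := Nat.add_one_mul_choose_eq n k
  have b := Nat.choose_succ_right_eq (n + 1) k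
  rw [a]; exact b

lemma lemA (e c d : ℕ) :
    (2 * e + 3) * (Nat.choose (2 * c + d) (c + d) * Nat.choose (2 * e + 2 * c + d + 3) (2 * e + 3))
      = (c + d + 1)
        * (Nat.choose (2 * c + d + 1) (c + d + 1)
            * Nat.choose (2 * e + 2 * c + d + 3) (2 * e + 2)) := by
  have t1 : Nat.choose (2 * e + 2 * c + d + 3) (2 * e + 3) * (2 * e + 3)
      = Nat.choose (2 * e + 2 * c + d + 3) (2 * e + 2) * (2 * c + d + 1) := by
    have h := Nat.choose_succ_right_eq (2 * e + 2 * c + d + 3) (2 * e + 2)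
    rw [show 2 * e + 2 + 1 = 2 * e + 3 by ring,
      show 2 * e + 2 * c + d + 3 - (2 * e + 2) = 2 * c + d + 1 by omega] at h
    exact h
  have t2 : (2 * c + d + 1) * Nat.choose (2 * c + d) (c + d)
      = Nat.choose (2 * c + d + 1) (c + d + 1) * (c + d + 1) := by
    have h := Nat.add_one_mul_choose_eq (2 * c + d) (c + d)
    exact h
  calc (2 * e + 3) * (Nat.choose (2 * c + d) (c + d)
          * Nat.choose (2 * e + 2 * c + d + 3) (2 * e + 3))
      = Nat.choose (2 * e + 2 * c + d + 3) (2 * e + 3) * (2 * e + 3)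
          * Nat.choose (2 * c + d) (c + d) := by ring
    _ = Nat.choose (2 * e + 2 * c + d + 3) (2 * e + 2) * (2 * c + d + 1)
          * Nat.choose (2 * c + d) (c + d) := by rw [t1]
    _ = (2 * c + d + 1) * Nat.choose (2 * c + d) (c + d)
          * Nat.choose (2 * e + 2 * c + d + 3) (2 * e + 2) := by ring
    _ = Nat.choose (2 * c + d + 1) (c + d + 1) * (c + d + 1)
          * Nat.choose (2 * e + 2 * c + d + 3) (2 * e + 2) := by rw [t2]
    _ = (c + d + 1) * (Nat.choose (2 * c + d + 1) (c + d + 1)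
          * Nat.choose (2 * e + 2 * c + d + 3) (2 * e + 2)) := by ring

lemma lemB (e c d : ℕ) :
    (2 * e + 3)
        * (Nat.choose (2 * c + d) (c + d) * Nat.choose (2 * e + 2 * c + d + 3) (2 * e + 3))
        * (4 * e + 4)
      = 2 * (c + d + 1) * (c + 1)
        * (Nat.choose (2 * c + d + 2) (c + d + 1)
            * Nat.choose (2 * e + 2 * c + d + 3) (2 * e + 1)) := by
  have t1 : Nat.choose (2 * e + 2 * c + d + 3) (2 * e + 3) * (2 * e + 3)
      = Nat.choose (2 * e + 2 * c + d + 3) (2 * e + 2) * (2 * c + d + 1) := by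
    have h := Nat.choose_succ_right_eq (2 * e + 2 * c + d + 3) (2 * e + 2)
    rw [show 2 * e + 2 + 1 = 2 * e + 3 by ring,
      show 2 * e + 2 * c + d + 3 - (2 * e + 2) = 2 * c + d + 1 by omega] at h
    exact h
  have t3 : Nat.choose (2 * e + 2 * c + d + 3) (2 * e + 2) * (2 * e + 2)
      = Nat.choose (2 * e + 2 * c + d + 3) (2 * e + 1) * (2 * c + d + 2) := by
    have h := Nat.choose_succ_right_eq (2 * e + 2 * c + d + 3) (2 * e + 1)
    rw [show 2 * e + 1 + 1 = 2 * e + 2 by ring,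
      show 2 * e + 2 * c + d + 3 - (2 * e + 1) = 2 * c + d + 2 by omega] at h
    exact h
  have t4 : (2 * c + d + 2) * Nat.choose (2 * c + d + 1) (c + d)
      = Nat.choose (2 * c + d + 2) (c + d + 1) * (c + d + 1) := by
    have h := Nat.add_one_mul_choose_eq (2 * c + d + 1) (c + d)
    rw [show 2 * c + d + 1 + 1 = 2 * c + d + 2 by ring] at h
    exact h
  have t5 : (2 * c + d + 1) * Nat.choose (2 * c + d) (c + d)
      = Nat.choose (2 * c + d + 1) (c + d) * (c + 1) := by
    have h := I3 (2 * c + d) (c + d)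
    rw [show 2 * c + d + 1 - (c + d) = c + 1 by omega] at h
    exact h
  calc (2 * e + 3)
        * (Nat.choose (2 * c + d) (c + d) * Nat.choose (2 * e + 2 * c + d + 3) (2 * e + 3))
        * (4 * e + 4)
      = Nat.choose (2 * e + 2 * c + d + 3) (2 * e + 3) * (2 * e + 3)
          * (Nat.choose (2 * c + d) (c + d) * (4 * e + 4)) := by ring
    _ = Nat.choose (2 * e + 2 * c + d + 3) (2 * e + 2) * (2 * c + d + 1)
          * (Nat.choose (2 * c + d) (c + d) * (4 * e + 4)) := by rw [t1]
    _ = 2 * (Nat.choose (2 * e + 2 * c + d + 3) (2 * e + 2) * (2 * e + 2))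
          * ((2 * c + d + 1) * Nat.choose (2 * c + d) (c + d)) := by ring
    _ = 2 * (Nat.choose (2 * e + 2 * c + d + 3) (2 * e + 1) * (2 * c + d + 2))
          * (Nat.choose (2 * c + d + 1) (c + d) * (c + 1)) := by rw [t3, t5]
    _ = 2 * (c + 1) * ((2 * c + d + 2) * Nat.choose (2 * c + d + 1) (c + d))
          * Nat.choose (2 * e + 2 * c + d + 3) (2 * e + 1) := by ring
    _ = 2 * (c + 1) * (Nat.choose (2 * c + d + 2) (c + d + 1) * (c + d + 1))
          * Nat.choose (2 * e + 2 * c + d + 3) (2 * e + 1) := by rw [t4]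
    _ = 2 * (c + d + 1) * (c + 1)
          * (Nat.choose (2 * c + d + 2) (c + d + 1)
              * Nat.choose (2 * e + 2 * c + d + 3) (2 * e + 1)) := by ring

theorem beta_odd_mixed_recurrence (l p q : ℕ) (hl : 1 ≤ l) (hlq : l ≤ q) (hqp : q < p) :
    (2 * l + 1) * beta (2 * l + 1) p q
      = (p - l) * beta (2 * l) p q
        + 2 * (p - l) * (q - l + 1) * beta (2 * l - 1) p q := by
  obtain ⟨e, rfl⟩ : ∃ e, l = e + 1 := ⟨l - 1, by omega⟩
  obtain ⟨c, rfl⟩ : ∃ c, q = e + 1 + c := ⟨q - (e + 1), by omega⟩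
  obtain ⟨d, rfl⟩ : ∃ d, p = e + 1 + c + 1 + d := ⟨p - (e + 2 + c), by omega⟩
  have hb1 : beta (2 * (e + 1) + 1) (e + 1 + c + 1 + d) (e + 1 + c)
      = Nat.choose (2 * c + d) (c + d) * Nat.choose (2 * e + 2 * c + d + 3) (2 * e + 3)
        * aSeq (2 * e + 3) := by
    unfold beta
    rw [if_neg (show ¬((2 * (e + 1) + 1) % 2 = 0) by omega),
      if_pos (show (2 * (e + 1) + 1) / 2 ≤ e + 1 + c
        ∧ (2 * (e + 1) + 1) / 2 + 1 ≤ e + 1 + c + 1 + d by constructor <;> omega),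
      show (2 * (e + 1) + 1) / 2 = e + 1 by omega,
      show (e + 1 + c + 1 + d) + (e + 1 + c) - (2 * (e + 1) + 1) = 2 * c + d by omega,
      show (e + 1 + c + 1 + d) - (e + 1 + 1) = c + d by omega,
      show (e + 1 + c + 1 + d) + (e + 1 + c) = 2 * e + 2 * c + d + 3 by omega,
      show 2 * (e + 1) + 1 = 2 * e + 3 by omega]
  have hb2 : beta (2 * (e + 1)) (e + 1 + c + 1 + d) (e + 1 + c)
      = Nat.choose (2 * c + d + 1) (c + d + 1) * Nat.choose (2 * e + 2 * c + d + 3) (2 * e + 2)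
        * aSeq (2 * e + 2) := by
    unfold beta
    rw [if_pos (show (2 * (e + 1)) % 2 = 0 by omega),
      if_pos (show (2 * (e + 1)) / 2 ≤ e + 1 + c + 1 + d
        ∧ (2 * (e + 1)) / 2 ≤ e + 1 + c by constructor <;> omega),
      show (2 * (e + 1)) / 2 = e + 1 by omega,
      show (e + 1 + c + 1 + d) + (e + 1 + c) - 2 * (e + 1) = 2 * c + d + 1 by omega,
      show (e + 1 + c + 1 + d) - (e + 1) = c + d + 1 by omega,
      show (e + 1 + c + 1 + d) + (e + 1 + c) = 2 * e + 2 * c + d + 3 by omega,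
      show 2 * (e + 1) = 2 * e + 2 by omega]
  have hb3 : beta (2 * (e + 1) - 1) (e + 1 + c + 1 + d) (e + 1 + c)
      = Nat.choose (2 * c + d + 2) (c + d + 1) * Nat.choose (2 * e + 2 * c + d + 3) (2 * e + 1)
        * aSeq (2 * e + 1) := by
    rw [show 2 * (e + 1) - 1 = 2 * e + 1 by omega]
    unfold beta
    rw [if_neg (show ¬((2 * e + 1) % 2 = 0) by omega),
      if_pos (show (2 * e + 1) / 2 ≤ e + 1 + c
        ∧ (2 * e + 1) / 2 + 1 ≤ e + 1 + c + 1 + d by constructor <;> omega),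
      show (2 * e + 1) / 2 = e by omega,
      show (e + 1 + c + 1 + d) + (e + 1 + c) - (2 * e + 1) = 2 * c + d + 2 by omega,
      show (e + 1 + c + 1 + d) - (e + 1) = c + d + 1 by omega,
      show (e + 1 + c + 1 + d) + (e + 1 + c) = 2 * e + 2 * c + d + 3 by omega]
  rw [hb1, hb2, hb3,
    show (e + 1 + c + 1 + d) - (e + 1) = c + d + 1 by omega,
    show (e + 1 + c) - (e + 1) + 1 = c + 1 by omega,
    show 2 * (e + 1) + 1 = 2 * e + 3 by omega,
    aSeq_rec e]
  calc (2 * e + 3)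
        * (Nat.choose (2 * c + d) (c + d) * Nat.choose (2 * e + 2 * c + d + 3) (2 * e + 3)
            * (aSeq (2 * e + 2) + (4 * e + 4) * aSeq (2 * e + 1)))
      = (2 * e + 3)
            * (Nat.choose (2 * c + d) (c + d)
                * Nat.choose (2 * e + 2 * c + d + 3) (2 * e + 3)) * aSeq (2 * e + 2)
          + (2 * e + 3)
              * (Nat.choose (2 * c + d) (c + d)
                  * Nat.choose (2 * e + 2 * c + d + 3) (2 * e + 3)) * (4 * e + 4)
              * aSeq (2 * e + 1) := by ring
    _ = (c + d + 1)
            * (Nat.choose (2 * c + d + 1) (c + d + 1)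
                * Nat.choose (2 * e + 2 * c + d + 3) (2 * e + 2)) * aSeq (2 * e + 2)
          + 2 * (c + d + 1) * (c + 1)
              * (Nat.choose (2 * c + d + 2) (c + d + 1)
                  * Nat.choose (2 * e + 2 * c + d + 3) (2 * e + 1)) * aSeq (2 * e + 1) := by
        rw [lemB e c d, lemA e c d]
    _ = (c + d + 1)
            * (Nat.choose (2 * c + d + 1) (c + d + 1)
                * Nat.choose (2 * e + 2 * c + d + 3) (2 * e + 2) * aSeq (2 * e + 2))
          + 2 * (c + d + 1) * (c + 1)
              * (Nat.choose (2 * c + d + 2) (c + d + 1)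
                  * Nat.choose (2 * e + 2 * c + d + 3) (2 * e + 1) * aSeq (2 * e + 1)) := by ring
end

section
/- Let p ≥ 1 be an integer and for each q ≥ 0 set b_{p,q} = Σ_{l=0}^{q} (β(2l,p,q) + β(2l+1,p,q)). Then in the formal power series ring ℤ[[y]] the identity (1−y)^{2p+1} · Σ_{q≥0} b_{p,q}·y^q = Σ_{q=0}^{p} (β(2q,p,q) + β(2q+1,p,q)) · y^q · (1−y)^{p−q} holds; in particular the left-hand side is a polynomial in y of degree at most p, and the q = 0 term of the right-hand side is (p+1)·(1−y)^p. -/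
/-- `bpq p q = Σ_{l=0}^{q} (β(2l,p,q) + β(2l+1,p,q))`, the number of symmetric
`(2p,2q+1)` clans. -/
def bpq (p q : ℕ) : ℕ := ∑ l ∈ Finset.range (q + 1), (beta (2 * l) p q + beta (2 * l + 1) p q)

/-!
By `C(n,s)·C(n-s,k-s) = C(n,k)·C(k,s)` with `n = p+q`, `k = p+l`, the factor `C(p+q, p+l)` splits
off: `β(2l,p,q) + β(2l+1,p,q) = c_l · C(p+q, p+l)` with `c_l = β(2l,p,l) + β(2l+1,p,l)`, which
vanishes for `l > p`. Hence `b_{p,q} = Σ_{l ≤ p} c_l · C(p+q, p+l)`, and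
`Σ_q C(p+q, p+l) y^q = y^l / (1-y)^{p+l+1}` turns `(1-y)^{2p+1} Σ_q b_{p,q} y^q` into the
polynomial `Σ_l c_l y^l (1-y)^{p-l}`.
-/

open PowerSeries

lemma beta_two_mul (p q l : ℕ) :
    beta (2 * l) p q = if l ≤ p ∧ l ≤ q then
      (p + q - 2 * l).choose (p - l) * (p + q).choose (2 * l) * aSeq (2 * l) else 0 := by
  simp [beta]

lemma beta_two_mul_add_one (p q l : ℕ) :
    beta (2 * l + 1) p q = if l ≤ q ∧ l + 1 ≤ p then
      (p + q - (2 * l + 1)).choose (p - (l + 1)) * (p + q).choose (2 * l + 1)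
        * aSeq (2 * l + 1) else 0 := by
  rw [beta, if_neg (by omega), show (2 * l + 1) / 2 = l by omega]

lemma beta_zero_add_beta_one {p : ℕ} (hp : 1 ≤ p) : beta 0 p 0 + beta 1 p 0 = p + 1 := by
  simp [beta, aSeq, hp]
  omega

lemma beta_two_mul_eq_mul_choose (p q l : ℕ) :
    beta (2 * l) p q = beta (2 * l) p l * (p + q).choose (p + l) := by
  rw [beta_two_mul, beta_two_mul]
  by_cases hlp : l ≤ p
  · by_cases hlq : l ≤ q
    · have h := Nat.choose_mul (n := p + q) (k := p + l) (s := 2 * l) (by omega)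
      rw [show p + l - 2 * l = p - l by omega] at h
      rw [if_pos ⟨hlp, hlq⟩, if_pos ⟨hlp, le_rfl⟩, show p + l - 2 * l = p - l by omega,
        Nat.choose_self, one_mul, mul_comm (Nat.choose (p + q - _) _), ← h]
      ring
    · simp [hlp, hlq, Nat.choose_eq_zero_of_lt (show p + q < p + l by omega)]
  · simp [hlp]

lemma beta_two_mul_add_one_eq_mul_choose (p q l : ℕ) :
    beta (2 * l + 1) p q = beta (2 * l + 1) p l * (p + q).choose (p + l) := by
  rw [beta_two_mul_add_one, beta_two_mul_add_one]
  by_cases hlp : l + 1 ≤ p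
  · by_cases hlq : l ≤ q
    · have h := Nat.choose_mul (n := p + q) (k := p + l) (s := 2 * l + 1) (by omega)
      rw [show p + l - (2 * l + 1) = p - (l + 1) by omega] at h
      rw [if_pos ⟨hlq, hlp⟩, if_pos ⟨le_rfl, hlp⟩,
        show p + l - (2 * l + 1) = p - (l + 1) by omega,
        Nat.choose_self, one_mul, mul_comm (Nat.choose (p + q - _) _), ← h]
      ring
    · simp [hlp, hlq, Nat.choose_eq_zero_of_lt (show p + q < p + l by omega)]
  · simp [hlp]

abbrev betaPair (p q l : ℕ) : ℕ := beta (2 * l) p q + beta (2 * l + 1) p q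

lemma betaPair_eq_mul_choose (p q l : ℕ) :
    betaPair p q l = betaPair p l l * (p + q).choose (p + l) := by
  rw [betaPair, betaPair, add_mul, ← beta_two_mul_eq_mul_choose,
    ← beta_two_mul_add_one_eq_mul_choose]

lemma betaPair_self_eq_zero {p l : ℕ} (h : p < l) : betaPair p l l = 0 := by
  rw [betaPair, beta_two_mul, beta_two_mul_add_one, if_neg (by omega), if_neg (by omega)]

lemma bpq_eq_sum_choose (p q : ℕ) :
    bpq p q = ∑ l ∈ Finset.range (p + 1), betaPair p l l * (p + q).choose (p + l) := by
  have hq : ∀ l ∈ Finset.range (p + q + 1), l ∉ Finset.range (q + 1) →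
      betaPair p l l * (p + q).choose (p + l) = 0 := fun l _ hl => by
    rw [Nat.choose_eq_zero_of_lt (by rw [Finset.mem_range] at hl; omega), mul_zero]
  have hp : ∀ l ∈ Finset.range (p + q + 1), l ∉ Finset.range (p + 1) →
      betaPair p l l * (p + q).choose (p + l) = 0 := fun l _ hl => by
    rw [betaPair_self_eq_zero (by rw [Finset.mem_range] at hl; omega), zero_mul]
  calc bpq p q = ∑ l ∈ Finset.range (q + 1), betaPair p l l * (p + q).choose (p + l) :=
        Finset.sum_congr rfl fun l _ => betaPair_eq_mul_choose p q l
    _ = ∑ l ∈ Finset.range (p + q + 1), betaPair p l l * (p + q).choose (p + l) :=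
        Finset.sum_subset (Finset.range_mono (by omega)) hq
    _ = _ := (Finset.sum_subset (Finset.range_mono (by omega)) hp).symm

section PowerSeries

variable (R : Type*) [CommRing R]

lemma mk_add_choose_add_mul_one_sub_pow (k l : ℕ) :
    (mk fun m => ((k + m).choose (k + l) : R)) * (1 - X) ^ (k + l + 1) = X ^ l := by
  have hshift : (mk fun m => ((k + m).choose (k + l) : R))
      = X ^ l * mk fun n => ((k + l + n).choose (k + l) : R) := by
    ext m
    rw [coeff_mk, coeff_X_pow_mul']
    split_ifs with hlm
    · rw [coeff_mk, show k + l + (m - l) = k + m by omega]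
    · rw [Nat.choose_eq_zero_of_lt (by omega), Nat.cast_zero]
  rw [hshift, mul_assoc, mk_add_choose_mul_one_sub_pow_eq_one, mul_one]

lemma mk_bpq_eq_sum (p : ℕ) :
    (mk fun q => (bpq p q : R))
      = ∑ l ∈ Finset.range (p + 1),
          (betaPair p l l : R⟦X⟧) * mk fun q => ((p + q).choose (p + l) : R) := by
  ext q
  simp only [coeff_mk, map_sum, ← map_natCast (C (R := R)), coeff_C_mul, bpq_eq_sum_choose,
    Nat.cast_sum, Nat.cast_mul]

lemma one_sub_X_pow_mul_mk_bpq (p : ℕ) :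
    (1 - X : R⟦X⟧) ^ (2 * p + 1) * (mk fun q => (bpq p q : R))
      = ∑ q ∈ Finset.range (p + 1),
          (betaPair p q q : R⟦X⟧) * X ^ q * (1 - X) ^ (p - q) := by
  rw [mk_bpq_eq_sum, Finset.mul_sum]
  refine Finset.sum_congr rfl fun l hl => ?_
  have hpow : (1 - X : R⟦X⟧) ^ (2 * p + 1) = (1 - X) ^ (p - l) * (1 - X) ^ (p + l + 1) := by
    rw [← pow_add]
    congr 1
    rw [Finset.mem_range] at hl
    omega
  rw [hpow, ← mk_add_choose_add_mul_one_sub_pow R p l]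
  ring

variable {R}

lemma coeff_X_pow_mul_one_sub_X_pow {k l d : ℕ} (h : l + d < k) :
    coeff k (X ^ l * (1 - X) ^ d : R⟦X⟧) = 0 := by
  have hcoe : (X ^ l * (1 - X) ^ d : R⟦X⟧)
      = ((Polynomial.X ^ l * (1 - Polynomial.X) ^ d : Polynomial R) : R⟦X⟧) := by
    push_cast
    rfl
  rw [hcoe, Polynomial.coeff_coe]
  exact Polynomial.coeff_eq_zero_of_natDegree_lt (lt_of_le_of_lt (by compute_degree) h)

end PowerSeries

theorem generating_function_identity (p : ℕ) (hp : 1 ≤ p) :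
    ((1 - PowerSeries.X : PowerSeries ℤ) ^ (2 * p + 1)
        * PowerSeries.mk (fun q => (bpq p q : ℤ))
      = ∑ q ∈ Finset.range (p + 1),
          ((beta (2 * q) p q + beta (2 * q + 1) p q : ℕ) : PowerSeries ℤ)
            * PowerSeries.X ^ q * (1 - PowerSeries.X) ^ (p - q)) ∧
    (∀ m : ℕ, p < m →
      PowerSeries.coeff (R := ℤ) m
        ((1 - PowerSeries.X : PowerSeries ℤ) ^ (2 * p + 1)
          * PowerSeries.mk (fun q => (bpq p q : ℤ))) = 0) ∧
    beta 0 p 0 + beta 1 p 0 = p + 1 := by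
  have hmain := one_sub_X_pow_mul_mk_bpq ℤ p
  refine ⟨hmain, fun m hm => ?_, beta_zero_add_beta_one hp⟩
  rw [hmain, map_sum]
  refine Finset.sum_eq_zero fun l hl => ?_
  rw [mul_assoc, ← map_natCast (C (R := ℤ)), coeff_C_mul,
    coeff_X_pow_mul_one_sub_X_pow (by rw [Finset.mem_range] at hl; omega), mul_zero]
end

section
/- Let n ≥ 1 be an integer and let π be an involution of {1,…,2n} satisfying π(2n+1−i) = 2n+1−π(i) for all i and π(i) ≠ 2n+1−i for every i with π(i) ≠ i. Then the number of 2-cycles of π is even; equivalently, the number of non-fixed points of π is divisible by 4. -/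
private lemma even_card_of_invol {α : Type*} [DecidableEq α] (f : α → α) :
    ∀ s : Finset α, (∀ a ∈ s, f a ∈ s) → (∀ a ∈ s, f (f a) = a) → (∀ a ∈ s, f a ≠ a) →
      Even s.card := by
  intro s
  induction s using Finset.strongInduction with
  | _ s ih =>
    intro h1 h2 h3
    rcases s.eq_empty_or_nonempty with rfl | ⟨a, ha⟩
    · simp
    · have hfa : f a ∈ s := h1 a ha
      have hne : f a ≠ a := h3 a ha
      set s' := s \ {a, f a} with hs'
      have hsub : {a, f a} ⊆ s := by
        intro x hx
        simp only [Finset.mem_insert, Finset.mem_singleton] at hx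
        rcases hx with rfl | rfl <;> assumption
      have hmem : ∀ b, b ∈ s' ↔ b ∈ s ∧ b ≠ a ∧ b ≠ f a := by
        intro b
        simp [hs', and_assoc]
      have hssub : s' ⊂ s := by
        refine Finset.ssubset_iff_subset_ne.mpr ⟨Finset.sdiff_subset, ?_⟩
        intro h
        have : a ∈ s' := h ▸ ha
        rw [hmem] at this
        exact this.2.1 rfl
      have hcard2 : ({a, f a} : Finset α).card = 2 := by
        rw [Finset.card_insert_of_notMem (by simpa using hne.symm), Finset.card_singleton]
      have hcard : s.card = s'.card + 2 := by
        rw [hs', Finset.card_sdiff_of_subset hsub, hcard2]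
        have := Finset.card_le_card hsub
        omega
      have hev : Even s'.card := by
        refine ih s' hssub ?_ ?_ ?_
        · intro b hb
          rw [hmem] at hb ⊢
          refine ⟨h1 b hb.1, ?_, ?_⟩
          · intro h
            exact hb.2.2 ((h2 b hb.1).symm.trans (congrArg f h))
          · intro h
            exact hb.2.1 ((h2 b hb.1).symm.trans ((congrArg f h).trans (h2 a ha)))
        · intro b hb; exact h2 b ((hmem b).mp hb).1
        · intro b hb; exact h3 b ((hmem b).mp hb).1
      rw [hcard]
      exact hev.add (by norm_num)

/-- For an involution `π` of `{1,…,2n}` (modelled as `Fin (2n)`) commuting with the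
order-reversing map `i ↦ 2n+1-i` (here `Fin.rev`) and such that `π i ≠ 2n+1-i` whenever
`π i ≠ i`, the number of non-fixed points of `π` is divisible by `4`; equivalently,
the number of 2-cycles of `π` is even. -/
theorem ssymmetric_involution_even_number_of_two_cycles
    (n : ℕ) (hn : 1 ≤ n) (π : Equiv.Perm (Fin (2 * n)))
    (hinv : π * π = 1)
    (hsym : ∀ i, π i.rev = (π i).rev)
    (hss : ∀ i, π i ≠ i → π i ≠ i.rev) :
    4 ∣ (Finset.univ.filter (fun i => π i ≠ i)).card := by
  have hππ : ∀ i, π (π i) = i := fun i => by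
    have := congrFun (congrArg (fun e => e.toFun) hinv) i
    simpa using this
  have hrevne : ∀ i : Fin (2 * n), i.rev ≠ i := by
    intro i h
    have hv : (i.rev : ℕ) = 2 * n - ((i : ℕ) + 1) := Fin.val_rev i
    have hi := i.isLt
    rw [h] at hv
    omega
  set S := Finset.univ.filter (fun i : Fin (2 * n) => π i ≠ i) with hS
  have hmemS : ∀ i, i ∈ S ↔ π i ≠ i := by intro i; simp [hS]
  -- S is closed under rev
  have hSrev : ∀ i, i ∈ S → i.rev ∈ S := by
    intro i hi
    rw [hmemS] at hi ⊢
    rw [hsym]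
    exact fun h => hi (Fin.rev_injective h)
  set T := S.filter (fun i : Fin (2 * n) => (i : ℕ) < (i.rev : ℕ)) with hT
  have hmemT : ∀ i, i ∈ T ↔ π i ≠ i ∧ (i : ℕ) < (i.rev : ℕ) := by
    intro i; simp [hT, hmemS]
  -- S = T ∪ image rev T, disjoint
  have hSeq : S = T ∪ T.image Fin.rev := by
    ext i
    simp only [Finset.mem_union, Finset.mem_image]
    constructor
    · intro hi
      rcases lt_or_gt_of_ne (fun h : (i : ℕ) = (i.rev : ℕ) => hrevne i (Fin.val_injective h.symm)) with h | h
      · exact Or.inl ((hmemT i).mpr ⟨(hmemS i).mp hi, h⟩)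
      · refine Or.inr ⟨i.rev, (hmemT _).mpr ⟨(hmemS _).mp (hSrev i hi), ?_⟩, Fin.rev_rev i⟩
        rw [Fin.rev_rev]; exact h
    · rintro (hi | ⟨j, hj, rfl⟩)
      · exact Finset.filter_subset _ _ hi
      · exact hSrev j (Finset.filter_subset _ _ hj)
  have hdisj : Disjoint T (T.image Fin.rev) := by
    rw [Finset.disjoint_left]
    intro i hi hmem
    rw [Finset.mem_image] at hmem
    obtain ⟨j, hj, rfl⟩ := hmem
    have h1 := ((hmemT _).mp hi).2
    have h2 := ((hmemT j).mp hj).2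
    rw [Fin.rev_rev] at h1
    omega
  have hcardS : S.card = 2 * T.card := by
    rw [hSeq, Finset.card_union_of_disjoint hdisj,
      Finset.card_image_of_injective _ Fin.rev_injective]
    ring
  -- the involution on T
  set f : Fin (2 * n) → Fin (2 * n) :=
    fun i => if ((π i : Fin (2 * n)) : ℕ) < ((π i).rev : ℕ) then π i else (π i).rev with hf
  have hfpos : ∀ j, ((π j : Fin (2 * n)) : ℕ) < ((π j).rev : ℕ) → f j = π j := by
    intro j h; simp only [hf]; rw [if_pos h]
  have hfneg : ∀ j, ¬ ((π j : Fin (2 * n)) : ℕ) < ((π j).rev : ℕ) → f j = (π j).rev := by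
    intro j h; simp only [hf]; rw [if_neg h]
  have hfT : ∀ i ∈ T, f i ∈ T := by
    intro i hi
    obtain ⟨hne, hlt⟩ := (hmemT i).mp hi
    have hπrev : ((π i : Fin (2 * n)) : ℕ) ≠ ((π i).rev : ℕ) :=
      fun h => hrevne (π i) (Fin.val_injective h.symm)
    rw [hmemT]
    by_cases h : ((π i : Fin (2 * n)) : ℕ) < ((π i).rev : ℕ)
    · rw [hfpos i h]
      refine ⟨fun heq => ?_, h⟩
      rw [hππ] at heq
      exact hne heq.symm
    · rw [hfneg i h]
      constructor
      · rw [hsym, hππ]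
        intro heq
        exact hne (Fin.rev_injective heq).symm
      · rw [Fin.rev_rev]; omega
  have hff : ∀ i ∈ T, f (f i) = i := by
    intro i hi
    obtain ⟨hne, hlt⟩ := (hmemT i).mp hi
    by_cases h : ((π i : Fin (2 * n)) : ℕ) < ((π i).rev : ℕ)
    · rw [hfpos i h, hfpos (π i) (by rw [hππ]; exact hlt), hππ]
    · rw [hfneg i h, hfneg ((π i).rev) (by rw [hsym, hππ, Fin.rev_rev]; omega),
        hsym, hππ, Fin.rev_rev]
  have hfne : ∀ i ∈ T, f i ≠ i := by
    intro i hi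
    obtain ⟨hne, hlt⟩ := (hmemT i).mp hi
    by_cases h : ((π i : Fin (2 * n)) : ℕ) < ((π i).rev : ℕ)
    · rw [hfpos i h]; exact hne
    · rw [hfneg i h]
      intro heq
      exact hss i hne (by rw [← Fin.rev_rev (π i), heq])
  obtain ⟨k, hk⟩ := even_card_of_invol f T hfT hff hfne
  rw [hcardS, hk]
  omega
end

section
/- Let p ≥ q ≥ 0 and 0 ≤ k ≤ q be integers and set n = p+q. Then the number N of signed (2p,2q) ssymmetric involutions whose involution has exactly 2k 2-cycles satisfies (q−k)!·(p−k)!·k!·N = (p+q)!; that is, N = C(p+q, 2k)·((2k)!/k!)·C(p+q−2k, p−k). -/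
open Finset Equiv

/-- A signed `(2p,2q)` ssymmetric involution: a pair `(π, ε)` where `π` is an involution of
`{1,…,2n}` (modelled as `Fin (2(p+q))`) commuting with the order-reversing map
`i ↦ 2n+1-i` (here `Fin.rev`), satisfying `π i ≠ 2n+1-i` whenever `π i ≠ i`, and `ε` labels
the fixed points of `π` by signs (`true` = `+`, `false` = `-`; we normalize `ε` to `false`
off the fixed points), symmetrically under `Fin.rev`, with exactly `2p-2q` more `+` labels
than `-` labels. -/
def IsSignedSsymInv (p q : ℕ) (π : Equiv.Perm (Fin (2 * (p + q))))
    (ε : Fin (2 * (p + q)) → Bool) : Prop :=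
  π * π = 1 ∧
  (∀ i, π i.rev = (π i).rev) ∧
  (∀ i, π i ≠ i → π i ≠ i.rev) ∧
  (∀ i, π i ≠ i → ε i = false) ∧
  (∀ i, π i = i → ε i.rev = ε i) ∧
  (Finset.univ.filter (fun i => π i = i ∧ ε i = true)).card
    = (Finset.univ.filter (fun i => π i = i ∧ ε i = false)).card + (2 * p - 2 * q)

/-- The number of signed `(2p,2q)` ssymmetric involutions whose involution has exactly `2k`
2-cycles, i.e. exactly `4k` non-fixed points. -/
noncomputable def signedSsymInvCount (p q k : ℕ) : ℕ :=
  Nat.card {x : Equiv.Perm (Fin (2 * (p + q))) × (Fin (2 * (p + q)) → Bool) //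
    IsSignedSsymInv p q x.1 x.2 ∧
    (Finset.univ.filter (fun i => x.1 i ≠ i)).card = 2 * (2 * k)}


namespace SSymAux

/-- Splitting `Fin (2*m)` into first/second half, second half indexed by `rev`. -/
def dE (m : ℕ) : Fin (2 * m) ≃ Fin m × Bool where
  toFun i := if h : (i : ℕ) < m then (⟨i, h⟩, false)
    else (⟨2 * m - 1 - i, by have := i.isLt; omega⟩, true)
  invFun x := if x.2 then ⟨2 * m - 1 - x.1, by have := x.1.isLt; omega⟩
    else ⟨x.1, by have := x.1.isLt; omega⟩
  left_inv i := by
    have hi := i.isLt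
    by_cases h : (i : ℕ) < m
    · simp [h]
    · simp only [dif_neg h, if_true]
      ext
      simp only [Fin.val_mk]
      omega
  right_inv x := by
    obtain ⟨a, s⟩ := x
    have := a.isLt
    cases s
    · simp
    · simp only [if_true]
      rw [dif_neg (by simp; omega)]
      simp only [Prod.mk.injEq, and_true]
      ext; simp; omega

lemma dE_rev (m : ℕ) (i : Fin (2 * m)) :
    dE m i.rev = ((dE m i).1, !(dE m i).2) := by
  have hi := i.isLt
  have hrev : (i.rev : ℕ) = 2 * m - 1 - i := by
    rw [Fin.val_rev]; omega
  by_cases h : (i : ℕ) < m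
  · have h2 : ¬ ((i.rev : ℕ) < m) := by omega
    simp only [dE, Equiv.coe_fn_mk, dif_neg h2, dif_pos h]
    refine Prod.ext ?_ (by simp)
    ext; simp; omega
  · have h2 : (i.rev : ℕ) < m := by omega
    simp only [dE, Equiv.coe_fn_mk, dif_pos h2, dif_neg h]
    refine Prod.ext ?_ (by simp)
    ext; simp; omega

lemma dE_symm_rev (m : ℕ) (a : Fin m) (s : Bool) :
    ((dE m).symm (a, s)).rev = (dE m).symm (a, !s) := by
  apply (dE m).injective
  rw [dE_rev]
  simp

/-- The index type: `k` 2-cycle-pair slots (each with two sides), `p-k` plus slots,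
`q-k` minus slots. -/
abbrev B (p q k : ℕ) := (Fin k × Bool) ⊕ (Fin (p - k) ⊕ Fin (q - k))

variable {p q k : ℕ}

/-- classification of `a : Fin (p+q)` according to `w`. -/
def cls (E : Fin (p + q) ≃ B p q k) (w : Perm (Fin (p + q))) (a : Fin (p + q)) : B p q k :=
  E (w⁻¹ a)

lemma cls_eq_iff (E : Fin (p + q) ≃ B p q k) (w : Perm (Fin (p + q))) (a : Fin (p + q))
    (x : B p q k) : cls E w a = x ↔ w (E.symm x) = a := by
  unfold cls
  constructor
  · intro h
    have : w⁻¹ a = E.symm x := by rw [← h]; simp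
    rw [← this]; simp
  · intro h
    rw [← h]; simp

lemma cls_apply_w (E : Fin (p + q) ≃ B p q k) (w : Perm (Fin (p + q))) (x : B p q k) :
    cls E w (w (E.symm x)) = x := (cls_eq_iff E w _ x).mpr rfl

/-- orientation of pair slot `i`. -/
def cross (E : Fin (p + q) ≃ B p q k) (w : Perm (Fin (p + q))) (i : Fin k) : Bool :=
  decide (w (E.symm (.inl (i, true))) < w (E.symm (.inl (i, false))))

def piAux (E : Fin (p + q) ≃ B p q k) (w : Perm (Fin (p + q))) :
    Fin (p + q) × Bool → Fin (p + q) × Bool := fun x =>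
  match cls E w x.1 with
  | .inl (i, s0) => (w (E.symm (.inl (i, !s0))), xor x.2 (cross E w i))
  | .inr _ => x

lemma piAux_invol (E : Fin (p + q) ≃ B p q k) (w : Perm (Fin (p + q))) :
    Function.Involutive (piAux E w) := by
  rintro ⟨a, s⟩
  rcases h : cls E w a with ⟨i, s0⟩ | r
  · have ha : w (E.symm (.inl (i, s0))) = a := (cls_eq_iff E w a _).mp h
    have hb : cls E w (w (E.symm (.inl (i, !s0)))) = .inl (i, !s0) := cls_apply_w E w _
    simp only [piAux, h, hb, Bool.not_not, ha, Bool.xor_assoc, Bool.xor_self, Bool.xor_false]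
  · simp only [piAux, h]

def PiP (E : Fin (p + q) ≃ B p q k) (w : Perm (Fin (p + q))) : Perm (Fin (2 * (p + q))) :=
  Function.Involutive.toPerm
    (fun i => (dE (p + q)).symm (piAux E w (dE (p + q) i)))
    (by intro i
        simp only [Equiv.apply_symm_apply, piAux_invol E w (dE (p + q) i),
          Equiv.symm_apply_apply])

lemma PiP_apply (E : Fin (p + q) ≃ B p q k) (w : Perm (Fin (p + q))) (i : Fin (2 * (p + q))) :
    PiP E w i = (dE (p + q)).symm (piAux E w (dE (p + q) i)) := rfl

def epsF (E : Fin (p + q) ≃ B p q k) (w : Perm (Fin (p + q))) :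
    Fin (2 * (p + q)) → Bool := fun i =>
  match cls E w ((dE (p + q)) i).1 with
  | .inr (.inl _) => true
  | _ => false


lemma PiP_fix_iff (E : Fin (p + q) ≃ B p q k) (w : Perm (Fin (p + q)))
    (i : Fin (2 * (p + q))) :
    PiP E w i = i ↔ (cls E w ((dE (p + q)) i).1).isLeft = false := by
  rw [PiP_apply, Equiv.symm_apply_eq]
  rcases h : cls E w ((dE (p + q)) i).1 with ⟨i0, s0⟩ | r
  · simp only [Sum.isLeft_inl]
    have ha : w (E.symm (.inl (i0, s0))) = (dE (p + q) i).1 := (cls_eq_iff E w _ _).mp h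
    constructor
    · intro hcon
      exfalso
      have h1 : (piAux E w (dE (p + q) i)).1 = (dE (p + q) i).1 := by rw [hcon]
      simp only [piAux, h] at h1
      have := ha ▸ h1
      have h2 : (Sum.inl (i0, !s0) : B p q k) = .inl (i0, s0) :=
        E.symm.injective (w.injective this)
      simp at h2
    · intro hcon; exact absurd hcon (by simp)
  · simp [piAux, h]

/-- helper subtype equivs -/
def subProdFst {α β : Type*} (P : α → Prop) : {x : α × β // P x.1} ≃ {a // P a} × β where
  toFun x := (⟨x.1.1, x.2⟩, x.1.2)
  invFun y := ⟨(y.1.1, y.2), y.1.2⟩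
  left_inv x := rfl
  right_inv y := rfl

def isP : B p q k → Bool
  | .inr (.inl _) => true
  | _ => false

def isM : B p q k → Bool
  | .inr (.inr _) => true
  | _ => false

def leftEquiv : {b : B p q k // b.isLeft = true} ≃ Fin k × Bool where
  toFun b := match b with
    | ⟨.inl x, _⟩ => x
  invFun x := ⟨.inl x, rfl⟩
  left_inv := by
    rintro ⟨(x | y), h⟩
    · rfl
    · simp at h
  right_inv x := rfl

def isPEquiv : {b : B p q k // isP b = true} ≃ Fin (p - k) where
  toFun b := match b with
    | ⟨.inr (.inl x), _⟩ => x
    | ⟨.inl _, h⟩ => absurd h (by simp [isP])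
    | ⟨.inr (.inr _), h⟩ => absurd h (by simp [isP])
  invFun x := ⟨.inr (.inl x), rfl⟩
  left_inv := by
    rintro ⟨(x | (y | z)), h⟩
    · simp [isP] at h
    · rfl
    · simp [isP] at h
  right_inv x := rfl

def isMEquiv : {b : B p q k // isM b = true} ≃ Fin (q - k) where
  toFun b := match b with
    | ⟨.inr (.inr x), _⟩ => x
    | ⟨.inl _, h⟩ => absurd h (by simp [isM])
    | ⟨.inr (.inl _), h⟩ => absurd h (by simp [isM])
  invFun x := ⟨.inr (.inr x), rfl⟩
  left_inv := by
    rintro ⟨(x | (y | z)), h⟩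
    · simp [isM] at h
    · simp [isM] at h
    · rfl
  right_inv x := rfl

lemma card_filter_eq (E : Fin (p + q) ≃ B p q k) (w : Perm (Fin (p + q)))
    (S : B p q k → Bool) (P : Fin (2 * (p + q)) → Prop) [DecidablePred P]
    (hP : ∀ i, P i ↔ S (cls E w ((dE (p + q)) i).1) = true) :
    (univ.filter P).card = 2 * (univ.filter (fun b => S b = true)).card := by
  classical
  rw [← Fintype.card_subtype, ← Fintype.card_subtype]
  have e1 : {i // P i} ≃ {x : Fin (p + q) × Bool // S (cls E w x.1) = true} :=
    (dE (p + q)).subtypeEquiv (fun i => by rw [hP])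
  have e2 : {x : Fin (p + q) × Bool // S (cls E w x.1) = true}
      ≃ {y : B p q k × Bool // S y.1 = true} :=
    Equiv.subtypeEquiv
      (Equiv.prodCongr ((w⁻¹ : Perm (Fin (p + q))).trans E) (Equiv.refl Bool))
      (fun x => Iff.rfl)
  have e3 := subProdFst (β := Bool) (fun b : B p q k => S b = true)
  rw [Fintype.card_congr (e1.trans (e2.trans e3)), Fintype.card_prod, Fintype.card_bool]
  ring

lemma count_left : (univ.filter (fun b : B p q k => b.isLeft = true)).card = 2 * k := by
  rw [← Fintype.card_subtype, Fintype.card_congr leftEquiv, Fintype.card_prod,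
    Fintype.card_bool, Fintype.card_fin]
  ring

lemma count_isP : (univ.filter (fun b : B p q k => isP b = true)).card = p - k := by
  rw [← Fintype.card_subtype, Fintype.card_congr isPEquiv, Fintype.card_fin]

lemma count_isM : (univ.filter (fun b : B p q k => isM b = true)).card = q - k := by
  rw [← Fintype.card_subtype, Fintype.card_congr isMEquiv, Fintype.card_fin]


lemma PiP_mul_self (E : Fin (p + q) ≃ B p q k) (w : Perm (Fin (p + q))) :
    PiP E w * PiP E w = 1 := by
  ext i
  simp [Perm.mul_apply, PiP_apply, Equiv.apply_symm_apply, piAux_invol E w (dE (p + q) i)]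

lemma piAux_not (E : Fin (p + q) ≃ B p q k) (w : Perm (Fin (p + q))) (a : Fin (p + q))
    (s : Bool) :
    piAux E w (a, !s) = ((piAux E w (a, s)).1, !(piAux E w (a, s)).2) := by
  rcases h : cls E w a with ⟨i0, s0⟩ | r
  · simp only [piAux, h]
    cases s <;> cases cross E w i0 <;> rfl
  · simp only [piAux, h]

lemma PiP_rev (E : Fin (p + q) ≃ B p q k) (w : Perm (Fin (p + q))) (i : Fin (2 * (p + q))) :
    PiP E w i.rev = (PiP E w i).rev := by
  rw [PiP_apply, PiP_apply, dE_rev, piAux_not, ← dE_symm_rev]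

lemma PiP_ne_rev (E : Fin (p + q) ≃ B p q k) (w : Perm (Fin (p + q))) (i : Fin (2 * (p + q)))
    (h : PiP E w i ≠ i) : PiP E w i ≠ i.rev := by
  intro hcon
  rcases hc : cls E w ((dE (p + q)) i).1 with ⟨i0, s0⟩ | r
  · have h1 := congrArg (dE (p + q)) hcon
    rw [PiP_apply, Equiv.apply_symm_apply, dE_rev] at h1
    simp only [piAux, hc] at h1
    have ha : w (E.symm (.inl (i0, s0))) = ((dE (p + q)) i).1 := (cls_eq_iff E w _ _).mp hc
    have hb : w (E.symm (.inl (i0, !s0))) = w (E.symm (.inl (i0, s0))) := by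
      rw [ha]; exact congrArg Prod.fst h1
    have := E.symm.injective (w.injective hb)
    simp at this
  · exact h ((PiP_fix_iff E w i).mpr (by rw [hc]; rfl))

theorem Phi_mem (hqp : q ≤ p) (hk : k ≤ q) (E : Fin (p + q) ≃ B p q k)
    (w : Perm (Fin (p + q))) :
    IsSignedSsymInv p q (PiP E w) (epsF E w) ∧
    (univ.filter (fun i => PiP E w i ≠ i)).card = 2 * (2 * k) := by
  classical
  have hP1 : ∀ i, (PiP E w i = i ∧ epsF E w i = true)
      ↔ isP (cls E w ((dE (p + q)) i).1) = true := by
    intro i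
    rw [PiP_fix_iff]
    rcases hc : cls E w ((dE (p + q)) i).1 with x | (x | x) <;> simp [epsF, hc, isP]
  have hP2 : ∀ i, (PiP E w i = i ∧ epsF E w i = false)
      ↔ isM (cls E w ((dE (p + q)) i).1) = true := by
    intro i
    rw [PiP_fix_iff]
    rcases hc : cls E w ((dE (p + q)) i).1 with x | (x | x) <;> simp [epsF, hc, isM]
  have hP0 : ∀ i, (PiP E w i ≠ i)
      ↔ (cls E w ((dE (p + q)) i).1).isLeft = true := by
    intro i
    rw [Ne, PiP_fix_iff]
    simp
  refine ⟨⟨PiP_mul_self E w, fun i => PiP_rev E w i, fun i => PiP_ne_rev E w i, ?_, ?_, ?_⟩, ?_⟩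
  · intro i h
    have hl : (cls E w ((dE (p + q)) i).1).isLeft = true := (hP0 i).mp h
    rcases hc : cls E w ((dE (p + q)) i).1 with x | r
    · simp [epsF, hc]
    · rw [hc] at hl; simp at hl
  · intro i _
    have : ((dE (p + q)) i.rev).1 = ((dE (p + q)) i).1 := by rw [dE_rev]
    simp [epsF, this]
  · rw [card_filter_eq E w isP _ hP1, card_filter_eq E w isM _ hP2, count_isP, count_isM]
    omega
  · rw [card_filter_eq E w Sum.isLeft _ hP0, count_left]


/-- Block permutations of the index type. -/
def bp (ρ : Perm (Fin k) × Perm (Fin (p - k)) × Perm (Fin (q - k))) : Perm (B p q k) :=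
  Equiv.sumCongr (Equiv.prodCongr ρ.1 (Equiv.refl Bool)) (Equiv.sumCongr ρ.2.1 ρ.2.2)

def jmap (E : Fin (p + q) ≃ B p q k) (ρ : Perm (Fin k) × Perm (Fin (p - k)) × Perm (Fin (q - k))) :
    Perm (Fin (p + q)) :=
  (E.symm).permCongr (bp ρ)

lemma jmap_apply (E : Fin (p + q) ≃ B p q k)
    (ρ : Perm (Fin k) × Perm (Fin (p - k)) × Perm (Fin (q - k))) (y : Fin (p + q)) :
    jmap E ρ y = E.symm (bp ρ (E y)) := by
  simp [jmap, Equiv.permCongr_apply]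

lemma cls_mul_iff (E : Fin (p + q) ≃ B p q k) (w : Perm (Fin (p + q)))
    (ρ : Perm (Fin k) × Perm (Fin (p - k)) × Perm (Fin (q - k))) (a : Fin (p + q))
    (x : B p q k) :
    cls E (w * jmap E ρ) a = x ↔ cls E w a = bp ρ x := by
  rw [cls_eq_iff, cls_eq_iff, Perm.mul_apply, jmap_apply, Equiv.apply_symm_apply]

lemma cls_mul' (E : Fin (p + q) ≃ B p q k) (w : Perm (Fin (p + q)))
    (ρ : Perm (Fin k) × Perm (Fin (p - k)) × Perm (Fin (q - k))) (a : Fin (p + q)) :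
    cls E (w * jmap E ρ) a = (bp ρ).symm (cls E w a) := by
  rw [cls_mul_iff]
  simp

lemma cross_mul (E : Fin (p + q) ≃ B p q k) (w : Perm (Fin (p + q)))
    (ρ : Perm (Fin k) × Perm (Fin (p - k)) × Perm (Fin (q - k))) (i : Fin k) :
    cross E (w * jmap E ρ) i = cross E w (ρ.1 i) := by
  unfold cross
  rw [Perm.mul_apply, Perm.mul_apply, jmap_apply, jmap_apply, Equiv.apply_symm_apply,
    Equiv.apply_symm_apply]
  rfl

lemma piAux_mul (E : Fin (p + q) ≃ B p q k) (w : Perm (Fin (p + q)))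
    (ρ : Perm (Fin k) × Perm (Fin (p - k)) × Perm (Fin (q - k))) :
    piAux E (w * jmap E ρ) = piAux E w := by
  funext x
  rcases h : cls E w x.1 with ⟨i0, s0⟩ | r
  · have h' : cls E (w * jmap E ρ) x.1 = .inl (ρ.1.symm i0, s0) := by
      rw [cls_mul', h]
      simp [bp]
    simp only [piAux, h, h']
    rw [cross_mul, Perm.mul_apply, jmap_apply, Equiv.apply_symm_apply]
    simp [bp]
  · have h' : cls E (w * jmap E ρ) x.1
        = .inr ((Equiv.sumCongr ρ.2.1 ρ.2.2).symm r) := by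
      rw [cls_mul', h]
      simp [bp]
    simp only [piAux, h, h']

lemma epsF_mul (E : Fin (p + q) ≃ B p q k) (w : Perm (Fin (p + q)))
    (ρ : Perm (Fin k) × Perm (Fin (p - k)) × Perm (Fin (q - k))) :
    epsF E (w * jmap E ρ) = epsF E w := by
  funext i
  rcases h : cls E w ((dE (p + q)) i).1 with x | (u | v) <;>
    simp [epsF, cls_mul', h, bp]

lemma PiP_mul (E : Fin (p + q) ≃ B p q k) (w : Perm (Fin (p + q)))
    (ρ : Perm (Fin k) × Perm (Fin (p - k)) × Perm (Fin (q - k))) :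
    PiP E (w * jmap E ρ) = PiP E w := by
  ext i
  rw [PiP_apply, PiP_apply, piAux_mul]


theorem exists_block (E : Fin (p + q) ≃ B p q k) (w w' : Perm (Fin (p + q)))
    (h1 : PiP E w = PiP E w') (h2 : epsF E w = epsF E w') :
    ∃ ρ : Perm (Fin k) × Perm (Fin (p - k)) × Perm (Fin (q - k)), w' = w * jmap E ρ := by
  classical
  set d := dE (p + q) with hd
  have hφinj : Function.Injective (fun x : B p q k => cls E w (w' (E.symm x))) := by
    intro x y hxy
    unfold cls at hxy
    exact E.symm.injective (w'.injective (w⁻¹.injective (E.injective hxy)))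
  -- C1
  have C1 : ∀ u : Fin (p - k), ∃ u', cls E w (w' (E.symm (.inr (.inl u)))) = .inr (.inl u') := by
    intro u
    set a := w' (E.symm (.inr (.inl u))) with haa
    have hw' : cls E w' a = .inr (.inl u) := cls_apply_w E w' _
    have he' : epsF E w' (d.symm (a, false)) = true := by
      simp only [epsF, hd, Equiv.apply_symm_apply, hw']
    have he : epsF E w (d.symm (a, false)) = true := by rw [h2]; exact he'
    rcases hc : cls E w a with x | (u' | v)
    · simp only [epsF, hd, Equiv.apply_symm_apply, hc] at he
      exact absurd he (by simp)
    · exact ⟨u', rfl⟩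
    · simp only [epsF, hd, Equiv.apply_symm_apply, hc] at he
      exact absurd he (by simp)
  -- C2
  have C2 : ∀ v : Fin (q - k), ∃ v', cls E w (w' (E.symm (.inr (.inr v)))) = .inr (.inr v') := by
    intro v
    set a := w' (E.symm (.inr (.inr v))) with haa
    have hw' : cls E w' a = .inr (.inr v) := cls_apply_w E w' _
    have hfix' : PiP E w' (d.symm (a, false)) = d.symm (a, false) := by
      rw [PiP_fix_iff]
      simp only [hd, Equiv.apply_symm_apply, hw', Sum.isLeft_inr]
    have hfix : PiP E w (d.symm (a, false)) = d.symm (a, false) := by rw [h1]; exact hfix'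
    have hL : (cls E w a).isLeft = false := by
      have := (PiP_fix_iff E w (d.symm (a, false))).mp hfix
      simpa [hd] using this
    have he' : epsF E w' (d.symm (a, false)) = false := by
      simp only [epsF, hd, Equiv.apply_symm_apply, hw']
    have he : epsF E w (d.symm (a, false)) = false := by rw [h2]; exact he'
    rcases hc : cls E w a with x | (u' | v')
    · rw [hc] at hL
      exact absurd hL (by simp)
    · simp only [epsF, hd, Equiv.apply_symm_apply, hc] at he
      exact absurd he (by simp)
    · exact ⟨v', rfl⟩
  -- C3
  have C3 : ∀ i : Fin k, ∃ i', cls E w (w' (E.symm (.inl (i, false)))) = .inl (i', false) ∧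
      cls E w (w' (E.symm (.inl (i, true)))) = .inl (i', true) := by
    intro i
    set a := w' (E.symm (.inl (i, false))) with haa
    set b := w' (E.symm (.inl (i, true))) with hbb
    have hab : a ≠ b := by
      intro hcon
      have := w'.injective (hcon)
      have := E.symm.injective this
      simp at this
    have hw'a : cls E w' a = .inl (i, false) := cls_apply_w E w' _
    have hw'b : cls E w' b = .inl (i, true) := cls_apply_w E w' _
    have hπ' : PiP E w' (d.symm (a, false)) = d.symm (b, cross E w' i) := by
      rw [PiP_apply, ← hd, Equiv.apply_symm_apply]
      simp only [piAux, hw'a, Bool.not_false, Bool.false_xor, ← hbb]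
    have hmoved' : PiP E w' (d.symm (a, false)) ≠ d.symm (a, false) := by
      intro hcon
      have := (PiP_fix_iff E w' (d.symm (a, false))).mp hcon
      rw [hd] at this
      rw [Equiv.apply_symm_apply] at this
      rw [hw'a] at this
      simp at this
    have hmoved : PiP E w (d.symm (a, false)) ≠ d.symm (a, false) := by rw [h1]; exact hmoved'
    have hL : (cls E w a).isLeft = true := by
      by_contra hcon
      exact hmoved ((PiP_fix_iff E w (d.symm (a, false))).mpr
        (by rw [hd, Equiv.apply_symm_apply]; simpa using hcon))
    rcases hc : cls E w a with ⟨i2, s2⟩ | r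
    swap
    · rw [hc] at hL; simp at hL
    have hπ : PiP E w (d.symm (a, false))
        = d.symm (w (E.symm (.inl (i2, !s2))), cross E w i2) := by
      rw [PiP_apply, ← hd, Equiv.apply_symm_apply]
      simp only [piAux, hc, Bool.false_xor]
    have hpair : (w (E.symm (.inl (i2, !s2))), cross E w i2) = (b, cross E w' i) := by
      have := hπ.symm.trans ((h1 ▸ hπ') : PiP E w (d.symm (a, false)) = _)
      exact d.symm.injective this
    have hb2 : w (E.symm (.inl (i2, !s2))) = b := congrArg Prod.fst hpair
    have hcr : cross E w i2 = cross E w' i := congrArg Prod.snd hpair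
    have ha2 : w (E.symm (.inl (i2, s2))) = a := (cls_eq_iff E w a _).mp hc
    have hs2 : s2 = false := by
      by_contra hcon
      have hs2t : s2 = true := by revert hcon; cases s2 <;> simp
      rw [hs2t] at ha2 hb2
      have hcrw : cross E w i2 = decide (a < b) := by
        unfold cross
        rw [ha2]
        simp only [Bool.not_true] at hb2
        rw [hb2]
      have hcrw' : cross E w' i = decide (b < a) := by
        unfold cross
        rw [← haa, ← hbb]
      rw [hcrw, hcrw'] at hcr
      rcases lt_or_gt_of_ne hab with hlt | hgt
      · rw [decide_eq_true hlt] at hcr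
        have : b < a := of_decide_eq_true hcr.symm
        exact absurd this (not_lt_of_gt hlt)
      · rw [decide_eq_true hgt] at hcr
        have : a < b := of_decide_eq_true hcr
        exact absurd this (not_lt_of_gt hgt)
    refine ⟨i2, by rw [hs2], ?_⟩
    rw [hs2] at hb2
    simp only [Bool.not_false] at hb2
    exact (cls_eq_iff E w b _).mpr hb2
  -- build the block permutation
  choose g1 hg1a hg1b using C3
  choose g2 hg2 using C1
  choose g3 hg3 using C2
  have g1inj : Function.Injective g1 := by
    intro i j hij
    have := hφinj (a₁ := .inl (i, false)) (a₂ := .inl (j, false))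
      (by simp only []; rw [hg1a i, hg1a j, hij])
    simpa using this
  have g2inj : Function.Injective g2 := by
    intro i j hij
    have := hφinj (a₁ := .inr (.inl i)) (a₂ := .inr (.inl j))
      (by simp only []; rw [hg2 i, hg2 j, hij])
    simpa using this
  have g3inj : Function.Injective g3 := by
    intro i j hij
    have := hφinj (a₁ := .inr (.inr i)) (a₂ := .inr (.inr j))
      (by simp only []; rw [hg3 i, hg3 j, hij])
    simpa using this
  refine ⟨⟨Equiv.ofBijective g1 (Finite.injective_iff_bijective.mp g1inj),
    Equiv.ofBijective g2 (Finite.injective_iff_bijective.mp g2inj),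
    Equiv.ofBijective g3 (Finite.injective_iff_bijective.mp g3inj)⟩, ?_⟩
  apply Equiv.ext
  intro y
  rw [Perm.mul_apply, jmap_apply]
  have key : cls E w (w' (E.symm (E y))) = bp
      (⟨Equiv.ofBijective g1 (Finite.injective_iff_bijective.mp g1inj),
        Equiv.ofBijective g2 (Finite.injective_iff_bijective.mp g2inj),
        Equiv.ofBijective g3 (Finite.injective_iff_bijective.mp g3inj)⟩) (E y) := by
    rcases hx : E y with ⟨i, s⟩ | (u | v)
    · cases s
      · rw [hg1a i]; simp [bp, Equiv.ofBijective]
      · rw [hg1b i]; simp [bp, Equiv.ofBijective]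
    · rw [hg2 u]; simp [bp, Equiv.ofBijective]
    · rw [hg3 v]; simp [bp, Equiv.ofBijective]
  have := (cls_eq_iff E w _ _).mp key
  rw [Equiv.symm_apply_apply] at this
  exact this.symm


lemma card_filter_half (m : ℕ) (P : Fin (2 * m) → Prop) (Q : Fin m → Prop)
    [DecidablePred P] [DecidablePred Q]
    (hPQ : ∀ i, P i ↔ Q ((dE m i).1)) :
    (univ.filter P).card = 2 * (univ.filter Q).card := by
  classical
  rw [← Fintype.card_subtype, ← Fintype.card_subtype]
  have e1 : {i // P i} ≃ {x : Fin m × Bool // Q x.1} :=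
    (dE m).subtypeEquiv (fun i => by rw [hPQ])
  have e3 := subProdFst (β := Bool) Q
  rw [Fintype.card_congr (e1.trans e3), Fintype.card_prod, Fintype.card_bool]
  ring

/-- first-half partner of a moved point. -/
def ptF (π : Perm (Fin (2 * (p + q)))) (a : Fin (p + q)) : Fin (p + q) :=
  ((dE (p + q)) (π ((dE (p + q)).symm (a, false)))).1

def obF (π : Perm (Fin (2 * (p + q)))) (a : Fin (p + q)) : Bool :=
  ((dE (p + q)) (π ((dE (p + q)).symm (a, false)))).2

lemma ptF_spec (π : Perm (Fin (2 * (p + q)))) (a : Fin (p + q)) :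
    π ((dE (p + q)).symm (a, false)) = (dE (p + q)).symm (ptF π a, obF π a) := by
  unfold ptF obF
  rw [Prod.mk.eta, Equiv.symm_apply_apply]


theorem exists_preimage (hqp : q ≤ p) (hk : k ≤ q) (E : Fin (p + q) ≃ B p q k)
    (π : Perm (Fin (2 * (p + q)))) (ε : Fin (2 * (p + q)) → Bool)
    (H : IsSignedSsymInv p q π ε)
    (Hm : (univ.filter (fun i => π i ≠ i)).card = 2 * (2 * k)) :
    ∃ w : Perm (Fin (p + q)), PiP E w = π ∧ epsF E w = ε := by
  classical
  obtain ⟨Hinv, Hrev, Hnrev, Hmveps, Hepsrev, Hcount⟩ := H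
  set d := dE (p + q) with hd
  have hππ : ∀ i, π (π i) = i := by
    intro i
    have := Equiv.Perm.ext_iff.mp Hinv i
    simpa [Perm.mul_apply] using this
  have hsymmtrue : ∀ a : Fin (p + q), d.symm (a, true) = (d.symm (a, false)).rev := by
    intro a
    rw [hd, dE_symm_rev]
    rfl
  have hfixat : ∀ (a : Fin (p + q)) (s : Bool), (π (d.symm (a, s)) = d.symm (a, s)
      ↔ π (d.symm (a, false)) = d.symm (a, false)) := by
    intro a s
    cases s
    · rfl
    · rw [hsymmtrue a, Hrev, Fin.rev_inj]
  have hepsat : ∀ (a : Fin (p + q)) (s : Bool), π (d.symm (a, false)) = d.symm (a, false) →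
      ε (d.symm (a, s)) = ε (d.symm (a, false)) := by
    intro a s hfix
    cases s
    · rfl
    · rw [hsymmtrue a]
      exact Hepsrev _ hfix
  have hmveps : ∀ (a : Fin (p + q)) (s : Bool), π (d.symm (a, false)) ≠ d.symm (a, false) →
      ε (d.symm (a, s)) = false := by
    intro a s hmv
    exact Hmveps _ (fun hcon => hmv ((hfixat a s).mp hcon))
  -- partner facts
  have f0 : ∀ a : Fin (p + q), π (d.symm (a, false)) = d.symm (ptF π a, obF π a) :=
    fun a => ptF_spec π a
  have f0' : ∀ a : Fin (p + q), π (d.symm (a, true)) = d.symm (ptF π a, !obF π a) := by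
    intro a
    rw [hsymmtrue a, Hrev, f0 a, hd, dE_symm_rev]
  have fptne : ∀ a : Fin (p + q), π (d.symm (a, false)) ≠ d.symm (a, false) → ptF π a ≠ a := by
    intro a hmv hcon
    rcases hob : obF π a with _ | _
    · exact hmv (by rw [f0 a, hcon, hob])
    · have : π (d.symm (a, false)) = (d.symm (a, false)).rev := by
        rw [f0 a, hcon, hob, hsymmtrue a]
      exact Hnrev _ hmv this
  have fpt : ∀ a : Fin (p + q), π (d.symm (a, false)) ≠ d.symm (a, false) →
      (π (d.symm (ptF π a, false)) ≠ d.symm (ptF π a, false) ∧ ptF π (ptF π a) = a ∧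
        obF π (ptF π a) = obF π a) := by
    intro a hmv
    have hne := fptne a hmv
    rcases hob : obF π a with _ | _
    · have h1 : π (d.symm (ptF π a, false)) = d.symm (a, false) := by
        conv_lhs => rw [show d.symm (ptF π a, false) = π (d.symm (a, false)) from by
          rw [f0 a, hob]]
        exact hππ _
      have h2 := f0 (ptF π a)
      rw [h1] at h2
      have h3 := d.symm.injective h2
      have h4 : a = ptF π (ptF π a) ∧ false = obF π (ptF π a) := by simpa using h3
      refine ⟨?_, h4.1.symm, by rw [← h4.2]⟩
      intro hcon
      rw [h1] at hcon
      have := d.symm.injective hcon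
      simp only [Prod.mk.injEq, and_true] at this
      exact hne this.symm
    · have h1 : π (d.symm (ptF π a, true)) = d.symm (a, false) := by
        conv_lhs => rw [show d.symm (ptF π a, true) = π (d.symm (a, false)) from by
          rw [f0 a, hob]]
        exact hππ _
      have h2 := f0' (ptF π a)
      rw [h1] at h2
      have h3 := d.symm.injective h2
      have h4 : a = ptF π (ptF π a) ∧ false = !obF π (ptF π a) := by
        simpa using h3
      have hobpt : obF π (ptF π a) = true := by
        rcases hx : obF π (ptF π a) with _ | _
        · rw [hx] at h4
          simpa using h4.2
        · rfl
      refine ⟨?_, h4.1.symm, hobpt⟩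
      intro hcon
      rw [f0 (ptF π a), ← h4.1, hobpt] at hcon
      have := d.symm.injective hcon
      simp at this
  -- counting
  have hi0 : ∀ i : Fin (2 * (p + q)), i = d.symm (((dE (p + q)) i).1, ((dE (p + q)) i).2) := by
    intro i
    rw [hd]
    simp
  have hcard2k : (univ.filter (fun a : Fin (p + q) =>
      π (d.symm (a, false)) ≠ d.symm (a, false))).card = 2 * k := by
    have ht := card_filter_half (p + q) (fun i => π i ≠ i)
      (fun a => π (d.symm (a, false)) ≠ d.symm (a, false)) (by
        intro i
        conv_lhs => rw [hi0 i]
        rw [← hd]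
        exact not_congr (hfixat _ _))
    rw [Hm] at ht
    omega
  have hiff : ∀ (t : Bool) (i : Fin (2 * (p + q))), (π i = i ∧ ε i = t) ↔
      (π (d.symm (((dE (p + q)) i).1, false)) = d.symm (((dE (p + q)) i).1, false) ∧
        ε (d.symm (((dE (p + q)) i).1, false)) = t) := by
    intro t i
    conv_lhs => rw [hi0 i]
    constructor
    · rintro ⟨h1, h2⟩
      have hfx := (hfixat _ _).mp h1
      exact ⟨hfx, by rw [← hepsat _ _ hfx]; exact h2⟩
    · rintro ⟨h1, h2⟩
      have hfx := (hfixat (((dE (p + q)) i).1) (((dE (p + q)) i).2)).mpr h1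
      exact ⟨hfx, by rw [hepsat _ _ h1]; exact h2⟩
  have htP := card_filter_half (p + q) (fun i => π i = i ∧ ε i = true)
    (fun a => π (d.symm (a, false)) = d.symm (a, false) ∧ ε (d.symm (a, false)) = true)
    (hiff true)
  have htM := card_filter_half (p + q) (fun i => π i = i ∧ ε i = false)
    (fun a => π (d.symm (a, false)) = d.symm (a, false) ∧ ε (d.symm (a, false)) = false)
    (hiff false)
  have hsplit1 : (univ.filter (fun a : Fin (p + q) =>
        π (d.symm (a, false)) ≠ d.symm (a, false))).card
      + (univ.filter (fun a : Fin (p + q) =>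
        ¬ (π (d.symm (a, false)) ≠ d.symm (a, false)))).card = p + q := by
    rw [Finset.card_filter_add_card_filter_not]
    simp
  have hsplit2 : (univ.filter (fun a : Fin (p + q) =>
        ¬ (π (d.symm (a, false)) ≠ d.symm (a, false)))).card
      = (univ.filter (fun a : Fin (p + q) =>
          π (d.symm (a, false)) = d.symm (a, false) ∧ ε (d.symm (a, false)) = true)).card
      + (univ.filter (fun a : Fin (p + q) =>
          π (d.symm (a, false)) = d.symm (a, false) ∧ ε (d.symm (a, false)) = false)).card := by
    rw [show (univ.filter (fun a : Fin (p + q) =>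
        ¬ (π (d.symm (a, false)) ≠ d.symm (a, false))))
        = univ.filter (fun a : Fin (p + q) => π (d.symm (a, false)) = d.symm (a, false)) from by
      apply Finset.filter_congr
      intro a _
      simp]
    rw [← Finset.filter_filter, ← Finset.filter_filter]
    rw [← Finset.card_filter_add_card_filter_not
      (p := fun a : Fin (p + q) => ε (d.symm (a, false)) = true)]
    congr 1
    apply congrArg
    apply Finset.filter_congr
    intro a _
    simp
  have hcardP : (univ.filter (fun a : Fin (p + q) =>
      π (d.symm (a, false)) = d.symm (a, false) ∧ ε (d.symm (a, false)) = true)).card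
      = p - k := by omega
  have hcardM : (univ.filter (fun a : Fin (p + q) =>
      π (d.symm (a, false)) = d.symm (a, false) ∧ ε (d.symm (a, false)) = false)).card
      = q - k := by omega
  -- the matched pairs
  have hpair : (univ.filter (fun a : Fin (p + q) =>
      π (d.symm (a, false)) ≠ d.symm (a, false) ∧ a < ptF π a)).card = k := by
    have hsum : (univ.filter (fun a : Fin (p + q) =>
        π (d.symm (a, false)) ≠ d.symm (a, false) ∧ a < ptF π a)).card
        + (univ.filter (fun a : Fin (p + q) =>
        π (d.symm (a, false)) ≠ d.symm (a, false) ∧ ¬ (a < ptF π a))).card = 2 * k := by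
      rw [← Finset.filter_filter, ← Finset.filter_filter,
        Finset.card_filter_add_card_filter_not]
      exact hcard2k
    have hgt : (univ.filter (fun a : Fin (p + q) =>
        π (d.symm (a, false)) ≠ d.symm (a, false) ∧ ¬ (a < ptF π a))).card
        = (univ.filter (fun a : Fin (p + q) =>
        π (d.symm (a, false)) ≠ d.symm (a, false) ∧ a < ptF π a)).card := by
      apply Finset.card_bij (fun a _ => ptF π a)
      · intro a ha
        simp only [Finset.mem_filter, Finset.mem_univ, true_and] at ha ⊢
        obtain ⟨hmv', hnlt⟩ := ha
        obtain ⟨hm2, hp2, _⟩ := fpt a hmv'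
        refine ⟨hm2, ?_⟩
        rw [hp2]
        exact lt_of_le_of_ne (not_lt.mp hnlt) (fptne a hmv')
      · intro a ha b hb hab
        simp only [Finset.mem_filter, Finset.mem_univ, true_and] at ha hb
        rw [← (fpt a ha.1).2.1, hab, (fpt b hb.1).2.1]
      · intro b hb
        simp only [Finset.mem_filter, Finset.mem_univ, true_and] at hb ⊢
        obtain ⟨hm2, hp2, _⟩ := fpt b hb.1
        exact ⟨ptF π b, ⟨hm2, by rw [hp2]; exact not_lt_of_gt hb.2⟩, hp2⟩
    omega
  -- choose indexings
  have cKcard : Fintype.card {a : Fin (p + q) //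
      π (d.symm (a, false)) ≠ d.symm (a, false) ∧ a < ptF π a} = k := by
    rw [Fintype.card_subtype]
    exact hpair
  have cPcard : Fintype.card {a : Fin (p + q) //
      π (d.symm (a, false)) = d.symm (a, false) ∧ ε (d.symm (a, false)) = true} = p - k := by
    rw [Fintype.card_subtype]
    exact hcardP
  have cMcard : Fintype.card {a : Fin (p + q) //
      π (d.symm (a, false)) = d.symm (a, false) ∧ ε (d.symm (a, false)) = false} = q - k := by
    rw [Fintype.card_subtype]
    exact hcardM
  obtain ⟨vK⟩ : Nonempty (Fin k ≃ {a : Fin (p + q) //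
      π (d.symm (a, false)) ≠ d.symm (a, false) ∧ a < ptF π a}) :=
    ⟨(Fintype.equivFinOfCardEq cKcard).symm⟩
  obtain ⟨vP⟩ : Nonempty (Fin (p - k) ≃ {a : Fin (p + q) //
      π (d.symm (a, false)) = d.symm (a, false) ∧ ε (d.symm (a, false)) = true}) :=
    ⟨(Fintype.equivFinOfCardEq cPcard).symm⟩
  obtain ⟨vM⟩ : Nonempty (Fin (q - k) ≃ {a : Fin (p + q) //
      π (d.symm (a, false)) = d.symm (a, false) ∧ ε (d.symm (a, false)) = false}) :=
    ⟨(Fintype.equivFinOfCardEq cMcard).symm⟩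
  set uK : Fin k → Fin (p + q) := fun i => (vK i).1 with huK
  have hK1 : ∀ i, π (d.symm (uK i, false)) ≠ d.symm (uK i, false) := fun i => (vK i).2.1
  have hK2 : ∀ i, uK i < ptF π (uK i) := fun i => (vK i).2.2
  set uFun : B p q k → Fin (p + q) := Sum.elim
    (fun z : Fin k × Bool => if z.2 = obF π (uK z.1) then uK z.1 else ptF π (uK z.1))
    (Sum.elim (fun u => (vP u).1) (fun v => (vM v).1)) with huF
  have huL : ∀ (i : Fin k) (s : Bool),
      uFun (.inl (i, s)) = if s = obF π (uK i) then uK i else ptF π (uK i) := fun _ _ => rfl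
  have huP : ∀ u, uFun (.inr (.inl u)) = (vP u).1 := fun _ => rfl
  have huM : ∀ v, uFun (.inr (.inr v)) = (vM v).1 := fun _ => rfl
  have huLmv : ∀ (i : Fin k) (s : Bool),
      π (d.symm (uFun (.inl (i, s)), false)) ≠ d.symm (uFun (.inl (i, s)), false) := by
    intro i s
    rw [huL]
    by_cases h : s = obF π (uK i)
    · rw [if_pos h]
      exact hK1 i
    · rw [if_neg h]
      exact (fpt (uK i) (hK1 i)).1
  have hKinj : ∀ i i' : Fin k, uK i = uK i' → i = i' := by
    intro i i' h
    exact vK.injective (Subtype.ext h)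
  have uinj : Function.Injective uFun := by
    intro x y hxy
    rcases x with ⟨i, s⟩ | (u | v) <;> rcases y with ⟨i', s'⟩ | (u' | v')
    · rw [huL, huL] at hxy
      by_cases h : s = obF π (uK i) <;> by_cases h' : s' = obF π (uK i')
      · rw [if_pos h, if_pos h'] at hxy
        obtain rfl := hKinj _ _ hxy
        rw [h, h']
      · rw [if_pos h, if_neg h'] at hxy
        exfalso
        have h1 := hK2 i'
        have h2 := hK2 i
        rw [← hxy] at h1
        have h3 : ptF π (uK i) = uK i' := by
          rw [hxy, (fpt (uK i') (hK1 i')).2.1]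
        rw [h3] at h2
        exact lt_irrefl _ (lt_trans h1 h2)
      · rw [if_neg h, if_pos h'] at hxy
        exfalso
        have h1 := hK2 i
        have h2 := hK2 i'
        rw [hxy] at h1
        have h3 : ptF π (uK i') = uK i := by
          rw [← hxy, (fpt (uK i) (hK1 i)).2.1]
        rw [h3] at h2
        exact lt_irrefl _ (lt_trans h1 h2)
      · rw [if_neg h, if_neg h'] at hxy
        have h3 : uK i = uK i' := by
          rw [← (fpt (uK i) (hK1 i)).2.1, hxy, (fpt (uK i') (hK1 i')).2.1]
        obtain rfl := hKinj _ _ h3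
        have hss : s = s' := by
          revert h h'
          rcases obF π (uK i) with _ | _ <;> cases s <;> cases s' <;> simp
        rw [hss]
    · exact absurd ((vP u').2.1) (by rw [← huP u', ← hxy]; exact huLmv i s)
    · exact absurd ((vM v').2.1) (by rw [← huM v', ← hxy]; exact huLmv i s)
    · exact absurd ((vP u).2.1) (by rw [← huP u, hxy]; exact huLmv i' s')
    · rw [huP, huP] at hxy
      rw [vP.injective (Subtype.ext hxy)]
    · exfalso
      rw [huP, huM] at hxy
      have h1 := (vP u).2.2
      rw [hxy] at h1
      rw [(vM v').2.2] at h1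
      exact absurd h1 (by simp)
    · exact absurd ((vM v).2.1) (by rw [← huM v, hxy]; exact huLmv i' s')
    · exfalso
      rw [huP, huM] at hxy
      have h1 := (vP u').2.2
      rw [← hxy] at h1
      rw [(vM v).2.2] at h1
      exact absurd h1 (by simp)
    · rw [huM, huM] at hxy
      rw [vM.injective (Subtype.ext hxy)]
  have hubij : Function.Bijective (fun y => uFun (E y)) :=
    Finite.injective_iff_bijective.mp (uinj.comp E.injective)
  set w : Perm (Fin (p + q)) := Equiv.ofBijective _ hubij with hw
  have hwE : ∀ x : B p q k, w (E.symm x) = uFun x := by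
    intro x
    show uFun (E (E.symm x)) = uFun x
    rw [Equiv.apply_symm_apply]
  have hclsu : ∀ x : B p q k, cls E w (uFun x) = x := fun x =>
    (cls_eq_iff E w _ x).mpr (hwE x)
  have husurj : ∀ a : Fin (p + q), ∃ x : B p q k, uFun x = a := by
    intro a
    obtain ⟨y, hy⟩ := hubij.2 a
    exact ⟨E y, hy⟩
  have hcross : ∀ i : Fin k, cross E w i = obF π (uK i) := by
    intro i
    unfold cross
    rw [hwE, hwE, huL, huL]
    rcases hob : obF π (uK i) with _ | _
    · rw [if_neg (by simp), if_pos rfl]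
      exact decide_eq_false (not_lt_of_gt (hK2 i))
    · rw [if_pos rfl, if_neg (by simp)]
      exact decide_eq_true (hK2 i)
  refine ⟨w, ?_, ?_⟩
  · apply Equiv.ext
    intro j
    obtain ⟨x, hx⟩ := husurj ((dE (p + q)) j).1
    have hj : j = d.symm (uFun x, ((dE (p + q)) j).2) := by
      rw [hx]
      exact hi0 j
    rw [PiP_apply, ← hd]
    conv_lhs => rw [hj, Equiv.apply_symm_apply]
    conv_rhs => rw [hj]
    have hc0 : cls E w ((uFun x, ((dE (p + q)) j).2).1) = x := hclsu x
    rcases x with ⟨i, s0⟩ | (u | v)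
    · simp only [piAux, hc0]
      rw [hwE, hcross]
      set s := ((dE (p + q)) j).2 with hs
      by_cases h0 : s0 = obF π (uK i)
      · have hval : uFun (.inl (i, s0)) = uK i := by rw [huL, if_pos h0]
        have hval' : uFun (.inl (i, !s0)) = ptF π (uK i) := by
          rw [huL, if_neg (by rw [h0]; simp)]
        rw [hval, hval']
        cases s
        · rw [f0 (uK i)]
          simp
        · rw [f0' (uK i)]
          simp
      · have hval : uFun (.inl (i, s0)) = ptF π (uK i) := by rw [huL, if_neg h0]
        have hval' : uFun (.inl (i, !s0)) = uK i := by
          rw [huL, if_pos (by revert h0; rcases obF π (uK i) with _ | _ <;> cases s0 <;> simp)]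
        rw [hval, hval']
        obtain ⟨hm2, hp2, ho2⟩ := fpt (uK i) (hK1 i)
        cases s
        · rw [f0 (ptF π (uK i)), hp2, ho2]
          simp
        · rw [f0' (ptF π (uK i)), hp2, ho2]
          simp
    · simp only [piAux, hc0]
      rw [huP]
      exact ((hfixat _ _).mpr (vP u).2.1).symm
    · simp only [piAux, hc0]
      rw [huM]
      exact ((hfixat _ _).mpr (vM v).2.1).symm
  · funext j
    obtain ⟨x, hx⟩ := husurj ((dE (p + q)) j).1
    have hj : j = d.symm (uFun x, ((dE (p + q)) j).2) := by
      rw [hx]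
      exact hi0 j
    have hc0 : cls E w ((dE (p + q)) j).1 = x := by rw [← hx]; exact hclsu x
    rcases x with ⟨i, s0⟩ | (u | v)
    · simp only [epsF, hc0]
      have h1 := hmveps (uFun (Sum.inl (i, s0))) (((dE (p + q)) j).2) (huLmv i s0)
      rw [← hj] at h1
      exact h1.symm
    · simp only [epsF, hc0]
      have h1 := hepsat (uFun (Sum.inr (Sum.inl u))) (((dE (p + q)) j).2)
        (by rw [huP]; exact (vP u).2.1)
      rw [← hj] at h1
      rw [h1, huP, (vP u).2.2]
    · simp only [epsF, hc0]
      have h1 := hepsat (uFun (Sum.inr (Sum.inr v))) (((dE (p + q)) j).2)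
        (by rw [huM]; exact (vM v).2.1)
      rw [← hj] at h1
      rw [h1, huM, (vM v).2.2]

lemma jmap_inj (E : Fin (p + q) ≃ B p q k) :
    Function.Injective (jmap E (p := p) (q := q) (k := k)) := by
  intro ρ ρ' h
  have hbp : bp ρ = bp ρ' := (Equiv.permCongr E.symm).injective h
  have h1 : ρ.1 = ρ'.1 := by
    apply Equiv.ext
    intro i
    have := congrArg (fun f : Perm (B p q k) => f (Sum.inl (i, false))) hbp
    simpa [bp] using this
  have h2 : ρ.2.1 = ρ'.2.1 := by
    apply Equiv.ext
    intro u
    have := congrArg (fun f : Perm (B p q k) => f (Sum.inr (Sum.inl u))) hbp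
    simpa [bp] using this
  have h3 : ρ.2.2 = ρ'.2.2 := by
    apply Equiv.ext
    intro v
    have := congrArg (fun f : Perm (B p q k) => f (Sum.inr (Sum.inr v))) hbp
    simpa [bp] using this
  exact Prod.ext h1 (Prod.ext h2 h3)

end SSymAux

theorem count_signed_ssymmetric_involutions_with_2k_pairs'
    (p q k : ℕ) (hqp : q ≤ p) (hk : k ≤ q) :
    Nat.factorial (q - k) * Nat.factorial (p - k) * Nat.factorial k * signedSsymInvCount p q k
        = Nat.factorial (p + q) ∧
    signedSsymInvCount p q k
        = Nat.choose (p + q) (2 * k) * (Nat.factorial (2 * k) / Nat.factorial k)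
            * Nat.choose (p + q - 2 * k) (p - k) := by
  classical
  obtain ⟨E⟩ : Nonempty (Fin (p + q) ≃ SSymAux.B p q k) := by
    apply Fintype.card_eq.mp
    simp only [Fintype.card_sum, Fintype.card_prod, Fintype.card_bool, Fintype.card_fin]
    omega
  set T := {x : Equiv.Perm (Fin (2 * (p + q))) × (Fin (2 * (p + q)) → Bool) //
    IsSignedSsymInv p q x.1 x.2 ∧
    (Finset.univ.filter (fun i => x.1 i ≠ i)).card = 2 * (2 * k)} with hT
  haveI : Fintype T := Fintype.ofFinite T
  have hNT : signedSsymInvCount p q k = Fintype.card T := by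
    rw [signedSsymInvCount]
    exact Nat.card_eq_fintype_card
  set ΦT : Equiv.Perm (Fin (p + q)) → T :=
    fun w => ⟨(SSymAux.PiP E w, SSymAux.epsF E w), SSymAux.Phi_mem hqp hk E w⟩ with hΦT
  have hfib : ∀ s : T, (Finset.univ.filter (fun w : Equiv.Perm (Fin (p + q)) => ΦT w = s)).card
      = Nat.factorial k * (Nat.factorial (p - k) * Nat.factorial (q - k)) := by
    rintro ⟨⟨π, ε⟩, hs⟩
    obtain ⟨w0, hw1, hw2⟩ := SSymAux.exists_preimage hqp hk E π ε hs.1 hs.2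
    have himg : Finset.univ.filter (fun w : Equiv.Perm (Fin (p + q)) => ΦT w = ⟨(π, ε), hs⟩)
        = Finset.image
          (fun ρ : Equiv.Perm (Fin k) × Equiv.Perm (Fin (p - k)) × Equiv.Perm (Fin (q - k)) =>
            w0 * SSymAux.jmap E ρ) Finset.univ := by
      ext w
      simp only [Finset.mem_filter, Finset.mem_univ, true_and, Finset.mem_image]
      constructor
      · intro h
        have hval := congrArg Subtype.val h
        have h1 : SSymAux.PiP E w = π := congrArg Prod.fst hval
        have h2 : SSymAux.epsF E w = ε := congrArg Prod.snd hval
        obtain ⟨ρ, hρ⟩ := SSymAux.exists_block E w0 w (by rw [hw1, h1]) (by rw [hw2, h2])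
        exact ⟨ρ, hρ.symm⟩
      · rintro ⟨ρ, rfl⟩
        apply Subtype.ext
        rw [hΦT]
        simp only
        rw [SSymAux.PiP_mul, SSymAux.epsF_mul, hw1, hw2]
    have hinj : Function.Injective
        (fun ρ : Equiv.Perm (Fin k) × Equiv.Perm (Fin (p - k)) × Equiv.Perm (Fin (q - k)) =>
          w0 * SSymAux.jmap E ρ) := by
      intro ρ ρ' h
      exact SSymAux.jmap_inj E (mul_left_cancel h)
    rw [himg, Finset.card_image_of_injective _ hinj, Finset.card_univ, Fintype.card_prod,
      Fintype.card_prod, Fintype.card_perm, Fintype.card_perm, Fintype.card_perm,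
      Fintype.card_fin, Fintype.card_fin, Fintype.card_fin]
  have hsum := Finset.card_eq_sum_card_fiberwise
    (f := ΦT) (s := Finset.univ) (t := Finset.univ) (fun x _ => Finset.mem_univ _)
  rw [Finset.card_univ, Fintype.card_perm, Fintype.card_fin] at hsum
  rw [Finset.sum_congr rfl (fun s _ => hfib s), Finset.sum_const, smul_eq_mul,
    Finset.card_univ] at hsum
  -- hsum : (p+q)! = card T * (k! * ((p-k)! * (q-k)!))
  have main1 : Nat.factorial (q - k) * Nat.factorial (p - k) * Nat.factorial k
      * signedSsymInvCount p q k = Nat.factorial (p + q) := by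
    rw [hNT, hsum]
    ring
  refine ⟨main1, ?_⟩
  have h2k : 2 * k ≤ p + q := by omega
  have hc1 := Nat.choose_mul_factorial_mul_factorial h2k
  have hpk : p - k ≤ p + q - 2 * k := by omega
  have hc2 := Nat.choose_mul_factorial_mul_factorial hpk
  have hqk : p + q - 2 * k - (p - k) = q - k := by omega
  rw [hqk] at hc2
  have hdvd : Nat.factorial k ∣ Nat.factorial (2 * k) :=
    Nat.factorial_dvd_factorial (by omega)
  have hkk : Nat.factorial k * (Nat.factorial (2 * k) / Nat.factorial k)
      = Nat.factorial (2 * k) := Nat.mul_div_cancel' hdvd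
  have hFpos : 0 < Nat.factorial (q - k) * Nat.factorial (p - k) * Nat.factorial k := by
    positivity
  apply Nat.eq_of_mul_eq_mul_left hFpos
  calc Nat.factorial (q - k) * Nat.factorial (p - k) * Nat.factorial k
        * signedSsymInvCount p q k = Nat.factorial (p + q) := main1
    _ = Nat.choose (p + q) (2 * k) * Nat.factorial (2 * k) * Nat.factorial (p + q - 2 * k) := by
        rw [hc1]
    _ = Nat.choose (p + q) (2 * k) * Nat.factorial (2 * k)
        * (Nat.choose (p + q - 2 * k) (p - k) * Nat.factorial (p - k)
          * Nat.factorial (q - k)) := by rw [hc2]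
    _ = Nat.factorial (q - k) * Nat.factorial (p - k) * Nat.factorial k
        * (Nat.choose (p + q) (2 * k) * (Nat.factorial (2 * k) / Nat.factorial k)
          * Nat.choose (p + q - 2 * k) (p - k)) := by
        conv_lhs => rw [← hkk]
        ring

theorem count_signed_ssymmetric_involutions_with_2k_pairs
    (p q k : ℕ) (hqp : q ≤ p) (hk : k ≤ q) :
    Nat.factorial (q - k) * Nat.factorial (p - k) * Nat.factorial k * signedSsymInvCount p q k
        = Nat.factorial (p + q) ∧
    signedSsymInvCount p q k
        = Nat.choose (p + q) (2 * k) * (Nat.factorial (2 * k) / Nat.factorial k)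
            * Nat.choose (p + q - 2 * k) (p - k) := by
  exact count_signed_ssymmetric_involutions_with_2k_pairs' p q k hqp hk
end

section
/- For all integers p, q ≥ 1, the numbers c_{p,q} satisfy the recurrence c_{p,q} = c_{p−1,q} + c_{p,q−1} + 2(p+q−1)·c_{p−1,q−1}. -/
/-- `gammaNum k p q = (p+q)!/((q-k)!·(p-k)!·k!)` if `k ≤ min(p,q)`, and `0` otherwise.
It counts the ssymmetric `(2p,2q)` clans whose associated involution has exactly
`2k` 2-cycles. -/
def gammaNum (k p q : ℕ) : ℕ :=
  if k ≤ p ∧ k ≤ q then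
    Nat.factorial (p + q) / (Nat.factorial (q - k) * Nat.factorial (p - k) * Nat.factorial k)
  else 0

/-- `cpq p q = Σ_{k=0}^{min(p,q)} gammaNum k p q`, the number of ssymmetric `(2p,2q)` clans. -/
def cpq (p q : ℕ) : ℕ := ∑ k ∈ Finset.range (min p q + 1), gammaNum k p q

/-- Closed form for `gammaNum` using binomial coefficients. -/
def gAux (k p q : ℕ) : ℕ :=
  (p + q).choose p * (p.choose k * (q.choose k * Nat.factorial k))

lemma gammaNum_eq_gAux (k p q : ℕ) : gammaNum k p q = gAux k p q := by
  unfold gammaNum gAux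
  by_cases h : k ≤ p ∧ k ≤ q
  · rw [if_pos h]
    obtain ⟨hkp, hkq⟩ := h
    have h1 := Nat.choose_mul_factorial_mul_factorial hkp
    have h2 := Nat.choose_mul_factorial_mul_factorial hkq
    have h3 := Nat.choose_mul_factorial_mul_factorial (Nat.le_add_right p q)
    rw [Nat.add_sub_cancel_left] at h3
    apply Nat.div_eq_of_eq_mul_left
    · positivity
    · calc Nat.factorial (p + q)
          = (p + q).choose p * Nat.factorial p * Nat.factorial q := h3.symm
        _ = (p + q).choose p * (p.choose k * Nat.factorial k * Nat.factorial (p - k))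
              * (q.choose k * Nat.factorial k * Nat.factorial (q - k)) := by rw [h1, h2]
        _ = (p + q).choose p * (p.choose k * (q.choose k * Nat.factorial k)) *
              (Nat.factorial (q - k) * Nat.factorial (p - k) * Nat.factorial k) := by ring
  · rw [if_neg h]
    rcases not_and_or.mp h with h' | h'
    · rw [Nat.choose_eq_zero_of_lt (Nat.lt_of_not_le h')]; ring
    · rw [Nat.choose_eq_zero_of_lt (Nat.lt_of_not_le h')]; ring

lemma gAux_eq_zero (k p q : ℕ) (h : min p q < k) : gAux k p q = 0 := by
  unfold gAux
  rcases le_total p q with hpq | hpq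
  · rw [Nat.choose_eq_zero_of_lt (show p < k by omega)]; ring
  · rw [Nat.choose_eq_zero_of_lt (show q < k by omega)]; ring

lemma cpq_eq_sum (p q n : ℕ) (h : min p q + 1 ≤ n) :
    cpq p q = ∑ k ∈ Finset.range n, gAux k p q := by
  unfold cpq
  rw [Finset.sum_congr rfl fun k _ => gammaNum_eq_gAux k p q]
  apply Finset.sum_subset (Finset.range_subset_range.mpr h)
  intro i _ hi
  exact gAux_eq_zero i p q (by simp at hi ⊢; omega)

lemma gAux_zero (a b : ℕ) :
    gAux 0 (a + 1) (b + 1) = gAux 0 a (b + 1) + gAux 0 (a + 1) b := by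
  simp only [gAux, Nat.choose_zero_right, Nat.factorial_zero, mul_one,
    show (a + 1) + (b + 1) = (a + b + 1) + 1 by ring,
    show a + (b + 1) = a + b + 1 by ring, show (a + 1) + b = a + b + 1 by ring]
  exact Nat.choose_succ_succ (a + b + 1) a

lemma gAux_key (a b k : ℕ) :
    gAux (k + 1) (a + 1) (b + 1) =
      gAux (k + 1) a (b + 1) + gAux (k + 1) (a + 1) b +
        2 * (a + b + 1) * gAux k a b := by
  unfold gAux
  have e1 : (a + 1) + (b + 1) = (a + b + 1) + 1 := by ring
  have e2 : a + (b + 1) = a + b + 1 := by ring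
  have e3 : (a + 1) + b = a + b + 1 := by ring
  rw [e1, e2, e3]
  -- named quantities
  have hX : ((a + b + 1) + 1).choose (a + 1)
      = (a + b + 1).choose a + (a + b + 1).choose (a + 1) :=
    Nat.choose_succ_succ (a + b + 1) a
  have hA : (a + 1).choose (k + 1) = a.choose k + a.choose (k + 1) :=
    Nat.choose_succ_succ a k
  have hB : (b + 1).choose (k + 1) = b.choose k + b.choose (k + 1) :=
    Nat.choose_succ_succ b k
  have hA1 : (a + 1) * a.choose k = (a + 1).choose (k + 1) * (k + 1) :=
    Nat.add_one_mul_choose_eq a k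
  have hB1 : (b + 1) * b.choose k = (b + 1).choose (k + 1) * (k + 1) :=
    Nat.add_one_mul_choose_eq b k
  have hZ : (a + b + 1) * (a + b).choose a = (a + b + 1).choose (a + 1) * (a + 1) :=
    Nat.add_one_mul_choose_eq (a + b) a
  have hYs : (a + b + 1).choose a = (a + b + 1).choose (b + 1) := by
    have := Nat.choose_symm (n := a + b + 1) (k := b + 1) (by omega)
    rwa [show a + b + 1 - (b + 1) = a by omega] at this
  have hWs : (a + b).choose a = (a + b).choose b := by
    have := Nat.choose_symm (n := a + b) (k := b) (by omega)
    rwa [show a + b - b = a by omega] at this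
  have hY : (a + b + 1) * (a + b).choose b = (a + b + 1).choose (b + 1) * (b + 1) :=
    Nat.add_one_mul_choose_eq (a + b) b
  rw [Nat.factorial_succ]
  zify at hX hA hB hA1 hB1 hZ hYs hWs hY ⊢
  linear_combination (norm := (push_cast; ring1))
      (((a + 1).choose (k + 1) * ((b + 1).choose (k + 1) * ((k + 1) * k.factorial)) : ℕ) : ℤ) * hX
    + (((a + b + 1).choose a * ((b + 1).choose (k + 1) * ((k + 1) * k.factorial)) : ℕ) : ℤ) * hA
    + (((a + b + 1).choose (a + 1) * ((a + 1).choose (k + 1) * ((k + 1) * k.factorial)) : ℕ) : ℤ) * hB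
    - (((a + b + 1).choose a * (a.choose k * k.factorial) : ℕ) : ℤ) * hB1
    - (((a + b + 1).choose (a + 1) * (b.choose k * k.factorial) : ℕ) : ℤ) * hA1
    - ((a.choose k * (b.choose k * k.factorial) : ℕ) : ℤ) * hZ
    + (((b + 1) * (a.choose k * (b.choose k * k.factorial)) : ℕ) : ℤ) * hYs
    - ((a.choose k * (b.choose k * k.factorial) : ℕ) : ℤ) * hY
    - (((a + b + 1) * (a.choose k * (b.choose k * k.factorial)) : ℕ) : ℤ) * hWs

theorem cpq_recurrence (p q : ℕ) (hp : 1 ≤ p) (hq : 1 ≤ q) :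
    cpq p q = cpq (p - 1) q + cpq p (q - 1) + 2 * (p + q - 1) * cpq (p - 1) (q - 1) := by
  obtain ⟨a, rfl⟩ : ∃ a, p = a + 1 := ⟨p - 1, by omega⟩
  obtain ⟨b, rfl⟩ : ∃ b, q = b + 1 := ⟨q - 1, by omega⟩
  simp only [Nat.add_sub_cancel]
  have hn : (a + 1) + (b + 1) - 1 = a + b + 1 := by omega
  rw [hn]
  set n := a + b + 1 with hn'
  rw [cpq_eq_sum (a + 1) (b + 1) (n + 1) (by omega),
      cpq_eq_sum a (b + 1) (n + 1) (by omega),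
      cpq_eq_sum (a + 1) b (n + 1) (by omega),
      cpq_eq_sum a b n (by omega)]
  rw [Finset.sum_range_succ' (fun k => gAux k (a + 1) (b + 1)) n,
      Finset.sum_range_succ' (fun k => gAux k a (b + 1)) n,
      Finset.sum_range_succ' (fun k => gAux k (a + 1) b) n]
  have : ∀ k ∈ Finset.range n, gAux (k + 1) (a + 1) (b + 1) =
      gAux (k + 1) a (b + 1) + gAux (k + 1) (a + 1) b + 2 * n * gAux k a b :=
    fun k _ => gAux_key a b k
  rw [Finset.sum_congr rfl this, gAux_zero a b]
  simp only [Finset.sum_add_distrib, ← Finset.mul_sum]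
  ring
end

section
/- For all nonnegative integers p and q, the sum of the weights ω(L) over all Delannoy paths L to (p,q) equals c_{p,q}; that is, Σ_{L ∈ D(p,q)} ω(L) = Σ_{k=0}^{min(p,q)} (p+q)!/((q−k)!·(p−k)!·k!). -/
/-- The three kinds of steps of a Delannoy path: `E = (1,0)`, `N = (0,1)`, `D = (1,1)`. -/
inductive DStep : Type
  | E : DStep
  | N : DStep
  | D : DStep
  deriving DecidableEq

/-- The lattice vector of a step. -/
def DStep.vec : DStep → ℕ × ℕ
  | DStep.E => (1, 0)
  | DStep.N => (0, 1)
  | DStep.D => (1, 1)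

/-- The weight of a Delannoy path starting at the lattice point `st`: each `E` or `N` step
has weight `1`, and a `D` step starting at `(a,b)` has weight `2(a+b+1)`; the weight of the
path is the product of the weights of its steps. -/
def pathWeight : ℕ × ℕ → List DStep → ℕ
  | _, [] => 1
  | st, s :: rest =>
      (match s with
        | DStep.E => 1
        | DStep.N => 1
        | DStep.D => 2 * (st.1 + st.2 + 1)) * pathWeight (st + s.vec) rest

/-!
Splitting a Delannoy path at its last step shows that the total weight `W p q` satisfies
`W (p+1) (q+1) = W p (q+1) + W (p+1) q + 2(p+q+1) W p q`, with `W = 1` on the axes.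

The `k`-th summand of `c_{p,q}` is `C(p+q,p) · C(p,k) · q(q-1)⋯(q-k+1)`, so
`c_{p,q} = C(p+q,p) · R p q` where `R p q` counts the placements of non-attacking rooks on a
`p × q` board. Conditioning on the last row, resp. the last column, gives
`R (p+1) (q+1) = R p (q+1) + (q+1) R p q = R (p+1) q + (p+1) R p q`; adding `p+1` times the
first to `q+1` times the second and using `(p+1)(q+1) C(p+q+2,p+1) = (p+q+2)(p+q+1) C(p+q,p)`
shows that `c` obeys the recurrence of `W`.
-/

open Finset
open scoped Nat

def rookNumber (p q : ℕ) : ℕ := ∑ k ∈ range (min p q + 1), p.choose k * q.descFactorial k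

theorem rookNumber_eq_sum_range {p q n : ℕ} (hn : min p q < n) :
    rookNumber p q = ∑ k ∈ range n, p.choose k * q.descFactorial k := by
  refine sum_subset (range_subset_range.2 hn) fun k _ hk => ?_
  rw [mem_range, not_lt, Nat.succ_le_iff, min_lt_iff] at hk
  rcases hk with hp | hq
  · rw [Nat.choose_eq_zero_of_lt hp, zero_mul]
  · rw [Nat.descFactorial_eq_zero_iff_lt.mpr hq, mul_zero]

theorem rookNumber_comm (p q : ℕ) : rookNumber p q = rookNumber q p := by
  rw [rookNumber_eq_sum_range (n := p + q + 1) (by omega),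
    rookNumber_eq_sum_range (n := q + p + 1) (by omega), add_comm q p]
  refine sum_congr rfl fun k _ => ?_
  simp only [Nat.descFactorial_eq_factorial_mul_choose]
  ring

theorem rookNumber_zero_left (q : ℕ) : rookNumber 0 q = 1 := by
  simp [rookNumber]

theorem rookNumber_zero_right (p : ℕ) : rookNumber p 0 = 1 := by
  rw [rookNumber_comm, rookNumber_zero_left]

theorem rookNumber_succ_succ (p q : ℕ) :
    rookNumber (p + 1) (q + 1) = rookNumber p (q + 1) + (q + 1) * rookNumber p q := by
  have pascal := sum_choose_succ_mul (R := ℕ) (fun k _ => (q + 1).descFactorial k) p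
  simp only [Nat.cast_id, Nat.succ_descFactorial_succ] at pascal
  rw [rookNumber_eq_sum_range (n := p + 2) (by omega), pascal,
    rookNumber_eq_sum_range (n := p + 1) (by omega),
    rookNumber_eq_sum_range (p := p) (n := p + 1) (by omega), mul_sum]
  congr 1
  exact sum_congr rfl fun k _ => by ring

theorem rookNumber_succ_succ' (p q : ℕ) :
    rookNumber (p + 1) (q + 1) = rookNumber (p + 1) q + (p + 1) * rookNumber p q := by
  rw [rookNumber_comm, rookNumber_succ_succ, rookNumber_comm q, rookNumber_comm q]

def clanNumber (p q : ℕ) : ℕ := (p + q).choose p * rookNumber p q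

theorem clanNumber_zero_left (q : ℕ) : clanNumber 0 q = 1 := by
  simp [clanNumber, rookNumber_zero_left]

theorem clanNumber_zero_right (p : ℕ) : clanNumber p 0 = 1 := by
  simp [clanNumber, rookNumber_zero_right]

theorem clanNumber_succ_succ (p q : ℕ) :
    clanNumber (p + 1) (q + 1)
      = clanNumber p (q + 1) + clanNumber (p + 1) q + 2 * (p + q + 1) * clanNumber p q := by
  have hR : (p + q + 2) * rookNumber (p + 1) (q + 1) = (p + 1) * rookNumber p (q + 1)
      + (q + 1) * rookNumber (p + 1) q + 2 * (p + 1) * (q + 1) * rookNumber p q := by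
    linear_combination (p + 1) * rookNumber_succ_succ p q + (q + 1) * rookNumber_succ_succ' p q
  have hZ : (p + 1) * (p + q + 1).choose (p + 1) = (p + q + 1) * (p + q).choose p := by
    linear_combination (Nat.add_one_mul_choose_eq (p + q) p).symm
  have hY : (q + 1) * (p + q + 1).choose p = (p + q + 1) * (p + q).choose p := by
    have := Nat.choose_mul_succ_eq (p + q) p
    rw [show p + q + 1 - p = q + 1 by omega] at this
    linear_combination this.symm
  have hX : (p + 1) * (q + 1) * (p + q + 2).choose (p + 1)
      = (p + q + 2) * (p + q + 1) * (p + q).choose p := by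
    linear_combination (q + 1) * (Nat.add_one_mul_choose_eq (p + q + 1) p).symm + (p + q + 2) * hY
  refine Nat.eq_of_mul_eq_mul_left (show 0 < (p + 1) * (q + 1) by positivity) ?_
  simp only [clanNumber, show p + 1 + (q + 1) = p + q + 2 by ring,
    show p + (q + 1) = p + q + 1 by ring, show p + 1 + q = p + q + 1 by ring]
  linear_combination rookNumber (p + 1) (q + 1) * hX + (p + q + 1) * (p + q).choose p * hR
    - (p + 1) * rookNumber p (q + 1) * hY - (q + 1) * rookNumber (p + 1) q * hZ

theorem sum_range_factorial_div_eq_clanNumber (p q : ℕ) :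
    ∑ k ∈ range (min p q + 1), (p + q)! / ((q - k)! * (p - k)! * k !) = clanNumber p q := by
  rw [clanNumber, rookNumber, mul_sum]
  refine sum_congr rfl fun k hk => Nat.div_eq_of_eq_mul_left (by positivity) ?_
  have hkp : k ≤ p := by rw [mem_range] at hk; omega
  have hkq : k ≤ q := by rw [mem_range] at hk; omega
  rw [← Nat.add_choose_mul_factorial_mul_factorial, ← Nat.choose_mul_factorial_mul_factorial hkp,
    ← Nat.factorial_mul_descFactorial hkq, Nat.choose_symm_add]
  ring

namespace DStep

def weight (st : ℕ × ℕ) : DStep → ℕ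
  | E => 1
  | N => 1
  | D => 2 * (st.1 + st.2 + 1)

end DStep

theorem pathWeight_cons (st : ℕ × ℕ) (s : DStep) (L : List DStep) :
    pathWeight st (s :: L) = s.weight st * pathWeight (st + s.vec) L := by
  cases s <;> rfl

theorem pathWeight_append_singleton (st : ℕ × ℕ) (L : List DStep) (s : DStep) :
    pathWeight st (L ++ [s]) = pathWeight st L * s.weight (st + (L.map DStep.vec).sum) := by
  induction L generalizing st with
  | nil => simp [pathWeight_cons, pathWeight]
  | cons t L ih => simp [pathWeight_cons, ih, mul_assoc, add_assoc]

instance : Fintype DStep :=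
  ⟨{.E, .N, .D}, fun s => by cases s <;> simp⟩

def delannoyPaths (x : ℕ × ℕ) : Set (List DStep) := {L | (L.map DStep.vec).sum = x}

theorem length_le_of_mem_delannoyPaths {x : ℕ × ℕ} {L : List DStep} (hL : L ∈ delannoyPaths x) :
    L.length ≤ x.1 + x.2 := by
  subst hL
  induction L with
  | nil => simp
  | cons s L ih => cases s <;> simp [DStep.vec] at ih ⊢ <;> omega

theorem delannoyPaths_finite (x : ℕ × ℕ) : (delannoyPaths x).Finite :=
  (List.finite_length_le DStep (x.1 + x.2)).subset fun _ => length_le_of_mem_delannoyPaths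

theorem delannoyPaths_zero : delannoyPaths (0, 0) = {[]} := by
  ext L
  rcases L.eq_nil_or_concat' with rfl | ⟨L, s, rfl⟩
  · simp [delannoyPaths, Prod.mk_zero_zero]
  · cases s <;> simp [delannoyPaths, DStep.vec, Prod.ext_iff]

theorem delannoyPaths_succ_zero (p : ℕ) :
    delannoyPaths (p + 1, 0) = (· ++ [DStep.E]) '' delannoyPaths (p, 0) := by
  ext L
  rcases L.eq_nil_or_concat' with rfl | ⟨L, s, rfl⟩
  · simp [delannoyPaths, Prod.ext_iff]
  · cases s <;> simp [delannoyPaths, DStep.vec, Prod.ext_iff]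

theorem delannoyPaths_zero_succ (q : ℕ) :
    delannoyPaths (0, q + 1) = (· ++ [DStep.N]) '' delannoyPaths (0, q) := by
  ext L
  rcases L.eq_nil_or_concat' with rfl | ⟨L, s, rfl⟩
  · simp [delannoyPaths, Prod.ext_iff]
  · cases s <;> simp [delannoyPaths, DStep.vec, Prod.ext_iff]

theorem delannoyPaths_succ_succ (p q : ℕ) :
    delannoyPaths (p + 1, q + 1) =
      (· ++ [DStep.E]) '' delannoyPaths (p, q + 1) ∪ (· ++ [DStep.N]) '' delannoyPaths (p + 1, q)
        ∪ (· ++ [DStep.D]) '' delannoyPaths (p, q) := by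
  ext L
  rcases L.eq_nil_or_concat' with rfl | ⟨L, s, rfl⟩
  · simp [delannoyPaths, Prod.ext_iff]
  · cases s <;> simp [delannoyPaths, DStep.vec, Prod.ext_iff]

theorem disjoint_image_append_singleton {s t : DStep} (hst : s ≠ t) (A B : Set (List DStep)) :
    Disjoint ((· ++ [s]) '' A) ((· ++ [t]) '' B) := by
  refine Set.disjoint_left.2 ?_
  rintro _ ⟨a, -, rfl⟩ ⟨b, -, hb⟩
  exact hst (List.singleton_inj.1 (List.append_inj' hb rfl).2).symm

noncomputable def delannoyWeight (x : ℕ × ℕ) : ℕ := ∑ᶠ L ∈ delannoyPaths x, pathWeight (0, 0) L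

theorem finsum_image_append_singleton (s : DStep) (x : ℕ × ℕ) :
    ∑ᶠ L ∈ (· ++ [s]) '' delannoyPaths x, pathWeight (0, 0) L = delannoyWeight x * s.weight x := by
  rw [finsum_mem_image (List.append_left_injective [s]).injOn, delannoyWeight, finsum_mem_mul]
  refine finsum_mem_congr rfl fun L hL => ?_
  rw [pathWeight_append_singleton, show (L.map DStep.vec).sum = x from hL, Prod.mk_zero_zero,
    zero_add]

theorem delannoyWeight_zero : delannoyWeight (0, 0) = 1 := by
  rw [delannoyWeight, delannoyPaths_zero, finsum_mem_singleton]
  rfl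

theorem delannoyWeight_succ_zero (p : ℕ) : delannoyWeight (p + 1, 0) = delannoyWeight (p, 0) := by
  rw [delannoyWeight, delannoyPaths_succ_zero, finsum_image_append_singleton]
  exact mul_one _

theorem delannoyWeight_zero_succ (q : ℕ) : delannoyWeight (0, q + 1) = delannoyWeight (0, q) := by
  rw [delannoyWeight, delannoyPaths_zero_succ, finsum_image_append_singleton]
  exact mul_one _

theorem delannoyWeight_succ_succ (p q : ℕ) :
    delannoyWeight (p + 1, q + 1) = delannoyWeight (p, q + 1) + delannoyWeight (p + 1, q)
      + 2 * (p + q + 1) * delannoyWeight (p, q) := by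
  have hfin (s : DStep) (x : ℕ × ℕ) := (delannoyPaths_finite x).image (· ++ [s])
  rw [delannoyWeight, delannoyPaths_succ_succ,
    finsum_mem_union ?_ ((hfin _ _).union (hfin _ _)) (hfin _ _),
    finsum_mem_union (disjoint_image_append_singleton (by decide) _ _) (hfin _ _) (hfin _ _)]
  · simp only [finsum_image_append_singleton, DStep.weight]
    ring
  · exact Disjoint.union_left (disjoint_image_append_singleton (by decide) _ _)
      (disjoint_image_append_singleton (by decide) _ _)

theorem delannoyWeight_eq_clanNumber : ∀ p q : ℕ, delannoyWeight (p, q) = clanNumber p q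
  | 0, 0 => by rw [delannoyWeight_zero, clanNumber_zero_left]
  | p + 1, 0 => by rw [delannoyWeight_succ_zero, delannoyWeight_eq_clanNumber p 0,
      clanNumber_zero_right, clanNumber_zero_right]
  | 0, q + 1 => by rw [delannoyWeight_zero_succ, delannoyWeight_eq_clanNumber 0 q,
      clanNumber_zero_left, clanNumber_zero_left]
  | p + 1, q + 1 => by
    rw [delannoyWeight_succ_succ, clanNumber_succ_succ, delannoyWeight_eq_clanNumber p (q + 1),
      delannoyWeight_eq_clanNumber (p + 1) q, delannoyWeight_eq_clanNumber p q]

/-- The sum of the weights of all Delannoy paths from `(0,0)` to `(p,q)` equals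
`c_{p,q} = Σ_{k=0}^{min(p,q)} (p+q)!/((q-k)!·(p-k)!·k!)`, the number of ssymmetric
`(2p,2q)` clans. -/
theorem sum_weights_delannoy_paths (p q : ℕ) :
    ∑ᶠ L ∈ {L : List DStep | (L.map DStep.vec).sum = (p, q)}, pathWeight (0, 0) L
      = ∑ k ∈ Finset.range (min p q + 1),
          Nat.factorial (p + q)
            / (Nat.factorial (q - k) * Nat.factorial (p - k) * Nat.factorial k) :=
  (delannoyWeight_eq_clanNumber p q).trans (sum_range_factorial_div_eq_clanNumber p q).symm
end
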